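/- arXiv:math/0703781 — 10 statements merged into one kernel-verified Lean document; each statement's English description precedes it below -/
import Mathlib

section
/- Let q : (0,∞) → ℝ be a C¹ function such that q²(x) − q'(x) is bounded below on (0,∞) and q²(x) − q'(x) → +∞ as x → ∞. Then |q(x)| → ∞ as x → ∞. -/
/-!
Fix `M > 0` and go far enough out that `q' ≤ q² - 2M²`. Then `q' ≤ -M² < 0` wherever
`|q| ≤ M`, so `q` can cross the levels `M` and `-M` only downwards. If `q` does not stay above
`M`, it drops below `M` and stays there; it then cannot stay in `(-M, M]`, where it decreases
at rate at least `M²`, so it drops below `-M` and stays there as well. Either way `M ≤ |q|`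
eventually.
-/

open Filter Set Topology

lemma le_of_deriv_neg_at_level {f f' : ℝ → ℝ} {a c : ℝ}
    (hf : ∀ x ≥ a, HasDerivAt f (f' x) x) (ha : f a ≤ c)
    (hlevel : ∀ x ≥ a, f x = c → f' x < 0) {x : ℝ} (hx : a ≤ x) : f x ≤ c :=
  image_le_of_deriv_right_lt_deriv_boundary (B := fun _ => c)
    (fun y hy => (hf y hy.1).continuousAt.continuousWithinAt)
    (fun y hy => (hf y hy.1).hasDerivWithinAt) ha (fun _ => hasDerivAt_const _ c)
    (fun y hy => hlevel y hy.1) ⟨hx, le_rfl⟩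

lemma sub_le_mul_sub_of_hasDerivAt_le {f f' : ℝ → ℝ} {a b C : ℝ} (hab : a ≤ b)
    (hf : ∀ x ∈ Icc a b, HasDerivAt f (f' x) x) (hle : ∀ x ∈ Icc a b, f' x ≤ C) :
    f b - f a ≤ C * (b - a) := by
  have hderiv : ∀ x ∈ Ioo a b, HasDerivAt f (f' x) x := fun x hx => hf x (Ioo_subset_Icc_self hx)
  refine (convex_Icc a b).image_sub_le_mul_sub_of_deriv_le
    (fun x hx => (hf x hx).continuousAt.continuousWithinAt) ?_ ?_ a (left_mem_Icc.2 hab) b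
    (right_mem_Icc.2 hab) hab
  · rw [interior_Icc]
    exact fun x hx => (hderiv x hx).differentiableAt.differentiableWithinAt
  · rw [interior_Icc]
    exact fun x hx => (hderiv x hx).deriv ▸ hle x (Ioo_subset_Icc_self hx)

lemma eventually_le_abs_of_deriv_le_sq_sub {q q' : ℝ → ℝ} {M : ℝ} (hM : 0 < M)
    (hq : ∀ᶠ x in atTop, HasDerivAt q (q' x) x)
    (hbound : ∀ᶠ x in atTop, q' x ≤ q x ^ 2 - 2 * M ^ 2) :
    ∀ᶠ x in atTop, M ≤ |q x| := by
  obtain ⟨X, hX⟩ := eventually_atTop.1 (hq.and hbound)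
  have hdecr : ∀ x ≥ X, |q x| ≤ M → q' x < 0 := fun x hx hqx => by
    have : q x ^ 2 ≤ M ^ 2 := sq_le_sq' (abs_le.1 hqx).1 (abs_le.1 hqx).2
    nlinarith [(hX x hx).2]
  have hbarrier : ∀ x₀ ≥ X, ∀ c, |c| ≤ M → q x₀ ≤ c → ∀ x ≥ x₀, q x ≤ c :=
    fun x₀ hx₀ c hc hqx₀ x hx => le_of_deriv_neg_at_level (fun y hy => (hX y (hx₀.trans hy)).1)
      hqx₀ (fun y hy hqy => hdecr y (hx₀.trans hy) (hqy ▸ hc)) hx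
  by_cases hhigh : ∀ x ≥ X, M < q x
  · exact eventually_atTop.2 ⟨X, fun x hx => (hhigh x hx).le.trans (le_abs_self _)⟩
  push Not at hhigh
  obtain ⟨x₀, hx₀, hqx₀⟩ := hhigh
  have hupper : ∀ x ≥ x₀, q x ≤ M := hbarrier x₀ hx₀ M (abs_of_pos hM).le hqx₀
  obtain ⟨x₁, hx₁, hqx₁⟩ : ∃ x₁ ≥ x₀, q x₁ ≤ -M := by
    by_contra! hlow
    have hslow : ∀ x ≥ x₀, q' x ≤ -M ^ 2 := fun x hx => by
      have : q x ^ 2 ≤ M ^ 2 := sq_le_sq' (hlow x hx).le (hupper x hx)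
      linarith [(hX x (hx₀.trans hx)).2]
    have hstep : 0 ≤ 2 / M := by positivity
    have hdrop := sub_le_mul_sub_of_hasDerivAt_le (f := q) (le_add_of_nonneg_right hstep)
      (fun x hx => (hX x (hx₀.trans hx.1)).1) (fun x hx => hslow x hx.1)
    have hrate : -M ^ 2 * (x₀ + 2 / M - x₀) = -(2 * M) := by field_simp; ring
    linarith [hupper x₀ le_rfl, hlow (x₀ + 2 / M) (le_add_of_nonneg_right hstep)]
  have hc : |-M| ≤ M := (abs_neg M ▸ abs_of_pos hM).le
  exact eventually_atTop.2 ⟨x₁, fun x hx =>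
    (le_neg.2 (hbarrier x₁ (hx₀.trans hx₁) (-M) hc hqx₁ x hx)).trans (neg_le_abs _)⟩

theorem abs_drift_tendsto_atTop_general (q q' : ℝ → ℝ)
    (hderiv : ∀ x ∈ Set.Ioi (0:ℝ), HasDerivAt q (q' x) x)
    (htop : Tendsto (fun x => (q x) ^ 2 - q' x) atTop atTop) :
    Tendsto (fun x => |q x|) atTop atTop := by
  refine tendsto_atTop.2 fun M => ?_
  have hM : 0 < max M 1 := lt_max_of_lt_right one_pos
  have hbound : ∀ᶠ x in atTop, q' x ≤ q x ^ 2 - 2 * max M 1 ^ 2 :=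
    (htop.eventually_ge_atTop (2 * max M 1 ^ 2)).mono fun x hx => by linarith
  exact (eventually_le_abs_of_deriv_le_sq_sub hM ((eventually_gt_atTop 0).mono hderiv)
    hbound).mono fun x hx => (le_max_left M 1).trans hx

/-- Let `q : (0,∞) → ℝ` be a `C¹` function such that `q²(x) − q'(x)` is
bounded below on `(0,∞)` and `q²(x) − q'(x) → +∞` as `x → ∞`.
Then `|q(x)| → ∞` as `x → ∞`. -/
theorem abs_drift_tendsto_atTop (q q' : ℝ → ℝ)
    (hderiv : ∀ x ∈ Set.Ioi (0:ℝ), HasDerivAt q (q' x) x)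
    (hcont : ContinuousOn q' (Set.Ioi 0))
    (hbdd : ∃ c : ℝ, ∀ x ∈ Set.Ioi (0:ℝ), c ≤ (q x) ^ 2 - q' x)
    (htop : Tendsto (fun x => (q x) ^ 2 - q' x) atTop atTop) :
    Tendsto (fun x => |q x|) atTop atTop :=
  abs_drift_tendsto_atTop_general q q' hderiv htop
end

section
/- Let q : (0,∞) → ℝ be a C¹ function such that q²(x) − q'(x) is bounded below on (0,∞) and q²(x) − q'(x) → +∞ as x → ∞. Then either q⁺(x) := max(q(x),0) → 0 as x → 0⁺, or q⁻(x) := max(−q(x),0) → 0 as x → 0⁺. -/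
/-!
Put `k = |c| + 1`, where `c` bounds `q² - q'` from below, so that `q' ≤ q² + k²`. This Riccati
inequality gives `(arctan (q / k))' = k q' / (k² + q²) ≤ k`, so `arctan (q x / k) - k x` is
antitone on `(0, ∞)`. Being also bounded above, it has a limit as `x → 0⁺`, hence so does
`arctan (q x / k)`. If this limit is `≤ 0` then `q⁺ → 0`, and if it is `≥ 0` then `q⁻ → 0`.
-/

open Filter Set Topology Real

theorem antitoneOn_arctan_div_sub_mul {s : Set ℝ} (hs : Convex ℝ s) (hso : IsOpen s)
    {q q' : ℝ → ℝ} {k : ℝ} (hk : 0 < k) (hq : ∀ x ∈ s, HasDerivAt q (q' x) x)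
    (hle : ∀ x ∈ s, q' x ≤ q x ^ 2 + k ^ 2) :
    AntitoneOn (fun x => arctan (q x / k) - k * x) s := by
  have hderiv : ∀ x ∈ s, HasDerivAt (fun x => arctan (q x / k) - k * x)
      (1 / (1 + (q x / k) ^ 2) * (q' x / k) - k) x := fun x hx => by
    simpa using ((hq x hx).div_const k).arctan.fun_sub ((hasDerivAt_id' x).const_mul k)
  refine antitoneOn_of_hasDerivWithinAt_nonpos hs
    (fun x hx => (hderiv x hx).continuousAt.continuousWithinAt)
    (fun x hx => (hderiv x (interior_subset hx)).hasDerivWithinAt) fun x hx => ?_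
  rw [hso.interior_eq] at hx
  have hslope : 1 / (1 + (q x / k) ^ 2) * (q' x / k) = k * q' x / (k ^ 2 + q x ^ 2) := by
    field_simp
  rw [hslope, sub_nonpos, div_le_iff₀ (by positivity)]
  nlinarith [hle x hx]

theorem exists_tendsto_arctan_div_nhdsGT {a k : ℝ} {q q' : ℝ → ℝ} (hk : 0 < k)
    (hq : ∀ x ∈ Ioi a, HasDerivAt q (q' x) x) (hle : ∀ x ∈ Ioi a, q' x ≤ q x ^ 2 + k ^ 2) :
    ∃ L, Tendsto (fun x => arctan (q x / k)) (𝓝[>] a) (𝓝 L) := by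
  have hanti := antitoneOn_arctan_div_sub_mul (convex_Ioi a) isOpen_Ioi hk hq hle
  have hbdd : BddAbove ((fun x => arctan (q x / k) - k * x) '' Ioi a) := by
    refine ⟨π / 2 - k * a, forall_mem_image.2 fun x hx => ?_⟩
    have : k * a < k * x := mul_lt_mul_of_pos_left hx hk
    linarith [arctan_lt_pi_div_two (q x / k)]
  have hlin : Tendsto (fun x => k * x) (𝓝[>] a) (𝓝 (k * a)) :=
    ((continuous_const.mul continuous_id).tendsto a).mono_left nhdsWithin_le_nhds
  exact ⟨_, by simpa using (hanti.tendsto_nhdsGT hbdd).add hlin⟩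

theorem tendsto_max_zero_of_tendsto_arctan_div {α : Type*} {l : Filter α} {f : α → ℝ}
    {k L : ℝ} (hk : 0 < k) (h : Tendsto (fun x => arctan (f x / k)) l (𝓝 L)) (hL : L ≤ 0) :
    Tendsto (fun x => max (f x) 0) l (𝓝 0) := by
  refine tendsto_order.2 ⟨fun ε hε => Eventually.of_forall fun x => hε.trans_le
    (le_max_right _ _), fun ε hε => ?_⟩
  have hpos : L < arctan (ε / k) := hL.trans_lt (arctan_pos.2 (div_pos hε hk))
  filter_upwards [(tendsto_order.1 h).2 _ hpos] with x hx
  rw [arctan_lt_arctan_iff, div_lt_div_iff_of_pos_right hk] at hx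
  exact max_lt hx hε

theorem qplus_or_qminus_tendsto_zero_general (q q' : ℝ → ℝ)
    (hderiv : ∀ x ∈ Set.Ioi (0:ℝ), HasDerivAt q (q' x) x)
    (hbdd : ∃ c : ℝ, ∀ x ∈ Set.Ioi (0:ℝ), c ≤ (q x) ^ 2 - q' x) :
    Tendsto (fun x => max (q x) 0) (𝓝[>] (0:ℝ)) (𝓝 0) ∨
      Tendsto (fun x => max (-q x) 0) (𝓝[>] (0:ℝ)) (𝓝 0) := by
  obtain ⟨c, hc⟩ := hbdd
  have hk : 0 < |c| + 1 := by positivity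
  have hriccati : ∀ x ∈ Ioi (0:ℝ), q' x ≤ q x ^ 2 + (|c| + 1) ^ 2 := fun x hx => by
    nlinarith [hc x hx, neg_abs_le c, abs_nonneg c]
  obtain ⟨L, hL⟩ := exists_tendsto_arctan_div_nhdsGT hk hderiv hriccati
  rcases le_total L 0 with hneg | hpos
  · exact Or.inl (tendsto_max_zero_of_tendsto_arctan_div hk hL hneg)
  · refine Or.inr (tendsto_max_zero_of_tendsto_arctan_div hk (L := -L) ?_ (neg_nonpos.2 hpos))
    simpa only [neg_div, arctan_neg] using hL.neg

/-- Let `q : (0,∞) → ℝ` be a `C¹` function such that `q²(x) − q'(x)` is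
bounded below on `(0,∞)` and `q²(x) − q'(x) → +∞` as `x → ∞`. Then either
`q⁺(x) = max(q(x),0) → 0` as `x → 0⁺`, or `q⁻(x) = max(−q(x),0) → 0` as `x → 0⁺`. -/
theorem qplus_or_qminus_tendsto_zero (q q' : ℝ → ℝ)
    (hderiv : ∀ x ∈ Set.Ioi (0:ℝ), HasDerivAt q (q' x) x)
    (hcont : ContinuousOn q' (Set.Ioi 0))
    (hbdd : ∃ c : ℝ, ∀ x ∈ Set.Ioi (0:ℝ), c ≤ (q x) ^ 2 - q' x)
    (htop : Tendsto (fun x => (q x) ^ 2 - q' x) atTop atTop) :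
    Tendsto (fun x => max (q x) 0) (𝓝[>] (0:ℝ)) (𝓝 0) ∨
      Tendsto (fun x => max (-q x) 0) (𝓝[>] (0:ℝ)) (𝓝 0) :=
  qplus_or_qminus_tendsto_zero_general q q' hderiv hbdd
end

section
/- Assume Q(x) → +∞ as x → ∞, let λ > 0, and let η : (0,∞) → ℝ be a strictly positive C² function satisfying η''(x) − 2q(x)η'(x) = −2λη(x) for all x > 0. Then the function F(x) := η'(x)e^{−Q(x)} is nonnegative and nonincreasing on (0,∞), and for every x > 0 one has 2λ∫ₓ^∞ η(y)e^{−Q(y)} dy ≤ F(x) < ∞. In particular η is nondecreasing on (0,∞). -/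
open Filter Set Topology MeasureTheory

/-!
The flux `F = η' e^{-Q}` has derivative `(η'' - 2qη') e^{-Q} = -2λη e^{-Q} < 0`, so it decreases.
If `F(x) < 0`, then for large `y`, where `Q(y) ≥ 0`, we would get `η'(y) = F(y) e^{Q(y)} ≤ F(x) < 0`,
so `η` would decrease at a uniform rate and eventually become negative. Hence `F ≥ 0`, so `η' ≥ 0`,
and integrating `F' = -2λη e^{-Q}` over `[x, b]` gives `2λ∫ₓᵇ η e^{-Q} = F(x) - F(b) ≤ F(x)`.
-/

theorem monotoneOn_Ioi_of_hasDerivAt_nonneg {f f' : ℝ → ℝ} {a : ℝ}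
    (hf : ∀ x ∈ Ioi a, HasDerivAt f (f' x) x) (hf' : ∀ x ∈ Ioi a, 0 ≤ f' x) :
    MonotoneOn f (Ioi a) :=
  monotoneOn_of_hasDerivWithinAt_nonneg (convex_Ioi a)
    (fun x hx => (hf x hx).continuousAt.continuousWithinAt)
    (fun x hx => (hf x (interior_subset hx)).hasDerivWithinAt)
    (fun x hx => hf' x (interior_subset hx))

theorem antitoneOn_Ioi_of_hasDerivAt_nonpos {f f' : ℝ → ℝ} {a : ℝ}
    (hf : ∀ x ∈ Ioi a, HasDerivAt f (f' x) x) (hf' : ∀ x ∈ Ioi a, f' x ≤ 0) :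
    AntitoneOn f (Ioi a) :=
  antitoneOn_of_hasDerivWithinAt_nonpos (convex_Ioi a)
    (fun x hx => (hf x hx).continuousAt.continuousWithinAt)
    (fun x hx => (hf x (interior_subset hx)).hasDerivWithinAt)
    (fun x hx => hf' x (interior_subset hx))

theorem hasDerivAt_of_eq_const_mul_integral {q Q : ℝ → ℝ} {c b x : ℝ}
    (hq : ContinuousOn q (Ioi 0)) (hb : 0 < b)
    (hQ : ∀ x ∈ Ioi (0 : ℝ), Q x = c * ∫ u in b..x, q u) (hx : 0 < x) :
    HasDerivAt Q (c * q x) x := by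
  have hint : IntervalIntegrable q volume b x :=
    (hq.mono fun t ht => (lt_min hb hx).trans_le ht.1).intervalIntegrable
  have hderiv := intervalIntegral.integral_hasDerivAt_right hint
    (hq.stronglyMeasurableAtFilter isOpen_Ioi x hx) (hq.continuousAt (Ioi_mem_nhds hx))
  refine (hderiv.const_mul c).congr_of_eventuallyEq ?_
  filter_upwards [Ioi_mem_nhds hx] with t ht using hQ t ht

theorem integrableOn_Ioi_and_integral_le_of_intervalIntegral_le {g : ℝ → ℝ} {a C : ℝ}
    (hg : ∀ b, IntegrableOn g (Ioc a b)) (hg0 : ∀ t ∈ Ici a, 0 ≤ g t)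
    (hC : ∀ b, a ≤ b → ∫ t in a..b, g t ≤ C) :
    IntegrableOn g (Ioi a) ∧ ∫ t in Ioi a, g t ≤ C := by
  have hnorm : ∀ b, a ≤ b → ∫ t in a..b, ‖g t‖ = ∫ t in a..b, g t := fun b hab =>
    intervalIntegral.integral_congr fun t ht =>
      Real.norm_of_nonneg (hg0 t (uIcc_of_le hab ▸ ht).1)
  have hint : IntegrableOn g (Ioi a) :=
    integrableOn_Ioi_of_intervalIntegral_norm_bounded C a hg tendsto_id
      (by filter_upwards [eventually_ge_atTop a] with b hb using (hnorm b hb).trans_le (hC b hb))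
  refine ⟨hint, le_of_tendsto (intervalIntegral_tendsto_integral_Ioi a hint tendsto_id) ?_⟩
  filter_upwards [eventually_ge_atTop a] with b hb using hC b hb

theorem integrableOn_Ioi_and_integral_le_of_hasDerivAt_neg {F g : ℝ → ℝ} {a x : ℝ}
    (hF : ∀ t ∈ Ioi a, HasDerivAt F (-g t) t) (hg : ContinuousOn g (Ioi a))
    (hg0 : ∀ t ∈ Ioi a, 0 ≤ g t) (hF0 : ∀ t ∈ Ioi a, 0 ≤ F t) (hx : a < x) :
    IntegrableOn g (Ioi x) ∧ ∫ t in Ioi x, g t ≤ F x := by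
  have hsub : ∀ b, Icc x b ⊆ Ioi a := fun b t ht => hx.trans_le ht.1
  refine integrableOn_Ioi_and_integral_le_of_intervalIntegral_le
    (fun b => ((hg.mono (hsub b)).integrableOn_Icc).mono_set Ioc_subset_Icc_self)
    (fun t ht => hg0 t (hx.trans_le ht)) fun b hxb => ?_
  have hsub' : uIcc x b ⊆ Ioi a := uIcc_of_le hxb ▸ hsub b
  have hftc := intervalIntegral.integral_eq_sub_of_hasDerivAt (fun t ht => hF t (hsub' ht))
    ((hg.mono hsub').neg.intervalIntegrable)
  rw [intervalIntegral.integral_neg] at hftc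
  linarith [hF0 b (hx.trans_le hxb)]

noncomputable def flux (η' Q : ℝ → ℝ) (x : ℝ) : ℝ := η' x * Real.exp (-Q x)

theorem hasDerivAt_flux {η' Q : ℝ → ℝ} {x a b : ℝ} (hη' : HasDerivAt η' a x)
    (hQ : HasDerivAt Q b x) : HasDerivAt (flux η' Q) ((a - b * η' x) * Real.exp (-Q x)) x :=
  (hη'.mul hQ.neg.exp).congr_deriv (by simp only [Pi.neg_apply]; ring)

theorem flux_mul_exp (η' Q : ℝ → ℝ) (x : ℝ) : flux η' Q x * Real.exp (Q x) = η' x := by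
  rw [flux, mul_assoc, ← Real.exp_add, neg_add_cancel, Real.exp_zero, mul_one]

theorem flux_nonneg_of_antitoneOn {η η' Q : ℝ → ℝ} {a x : ℝ} (hQ : Tendsto Q atTop atTop)
    (hη : ∀ y ∈ Ioi a, HasDerivAt η (η' y) y) (hpos : ∀ y ∈ Ioi a, 0 < η y)
    (hF : AntitoneOn (flux η' Q) (Ioi a)) (hx : x ∈ Ioi a) : 0 ≤ flux η' Q x := by
  by_contra! hneg
  obtain ⟨N, hN⟩ := eventually_atTop.1 ((hQ.eventually_ge_atTop 0).and (eventually_ge_atTop x))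
  have hNa : a < N := hx.trans_le (hN N le_rfl).2
  -- Once `Q ≥ 0`, the factor `e^Q ≥ 1` can only make the negative flux more negative.
  have hη'_le : ∀ y, N ≤ y → η' y ≤ flux η' Q x := by
    intro y hy
    have hFy : flux η' Q y ≤ flux η' Q x := hF hx (hNa.trans_le hy) (hN y hy).2
    have hexp : 1 ≤ Real.exp (Q y) := Real.one_le_exp (hN y hy).1
    rw [← flux_mul_exp η' Q y]
    nlinarith
  have hmvt : ∀ y, N ≤ y → η y - η N ≤ flux η' Q x * (y - N) := by
    intro y hy
    refine (convex_Ici N).image_sub_le_mul_sub_of_deriv_le ?_ ?_ ?_ N self_mem_Ici y hy hy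
    · exact fun t ht => (hη t (hNa.trans_le ht)).continuousAt.continuousWithinAt
    · rw [interior_Ici]
      exact fun t ht => (hη t (hNa.trans ht)).differentiableAt.differentiableWithinAt
    · rw [interior_Ici]
      exact fun t ht => (hη t (hNa.trans ht)).deriv ▸ hη'_le t ht.le
  have hy : N ≤ N - η N / flux η' Q x :=
    le_sub_self_iff _ |>.2 (div_nonpos_of_nonneg_of_nonpos (hpos N hNa).le hneg.le)
  have hdrop : flux η' Q x * (N - η N / flux η' Q x - N) = -η N := by
    rw [sub_sub_cancel_left, mul_neg, mul_div_cancel₀ _ hneg.ne]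
  linarith [hmvt _ hy, hpos _ (hNa.trans_le hy)]

theorem flux_nonneg_antitone_and_eta_monotone_general (q q' Q : ℝ → ℝ) (l : ℝ) (η η' η'' : ℝ → ℝ)
    (hqderiv : ∀ x ∈ Set.Ioi (0:ℝ), HasDerivAt q (q' x) x)
    (hQ : ∀ x ∈ Set.Ioi (0:ℝ), Q x = 2 * ∫ u in (1:ℝ)..x, q u)
    (hQtop : Tendsto Q atTop atTop)
    (hl : 0 < l)
    (hη1 : ∀ x ∈ Set.Ioi (0:ℝ), HasDerivAt η (η' x) x)
    (hη2 : ∀ x ∈ Set.Ioi (0:ℝ), HasDerivAt η' (η'' x) x)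
    (hηpos : ∀ x ∈ Set.Ioi (0:ℝ), 0 < η x)
    (hODE : ∀ x ∈ Set.Ioi (0:ℝ), η'' x - 2 * q x * η' x = -2 * l * η x) :
    (∀ x ∈ Set.Ioi (0:ℝ), 0 ≤ η' x * Real.exp (-(Q x))) ∧
    (∀ x ∈ Set.Ioi (0:ℝ), ∀ y, x ≤ y →
      η' y * Real.exp (-(Q y)) ≤ η' x * Real.exp (-(Q x))) ∧
    (∀ x ∈ Set.Ioi (0:ℝ),
      MeasureTheory.IntegrableOn (fun y => η y * Real.exp (-(Q y))) (Set.Ioi x) ∧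
      2 * l * ∫ y in Set.Ioi x, η y * Real.exp (-(Q y)) ≤ η' x * Real.exp (-(Q x))) ∧
    (∀ x ∈ Set.Ioi (0:ℝ), ∀ y, x ≤ y → η x ≤ η y) := by
  set g : ℝ → ℝ := fun y => η y * Real.exp (-(Q y))
  have hqc : ContinuousOn q (Ioi 0) := fun x hx => (hqderiv x hx).continuousAt.continuousWithinAt
  have hQd : ∀ x ∈ Ioi (0:ℝ), HasDerivAt Q (2 * q x) x :=
    fun x hx => hasDerivAt_of_eq_const_mul_integral hqc one_pos hQ hx
  have hg : ContinuousOn g (Ioi 0) := fun x hx =>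
    ((hη1 x hx).continuousAt.mul (hQd x hx).neg.exp.continuousAt).continuousWithinAt
  have hg0 : ∀ x ∈ Ioi (0:ℝ), 0 ≤ 2 * l * g x := fun x hx => by
    have := hηpos x hx; positivity
  have hFd : ∀ x ∈ Ioi (0:ℝ), HasDerivAt (flux η' Q) (-(2 * l * g x)) x := fun x hx =>
    (hasDerivAt_flux (hη2 x hx) (hQd x hx)).congr_deriv (by rw [hODE x hx]; ring)
  have hanti : AntitoneOn (flux η' Q) (Ioi 0) :=
    antitoneOn_Ioi_of_hasDerivAt_nonpos hFd fun x hx => neg_nonpos.2 (hg0 x hx)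
  have hnonneg : ∀ x ∈ Ioi (0:ℝ), 0 ≤ flux η' Q x :=
    fun x hx => flux_nonneg_of_antitoneOn hQtop hη1 hηpos hanti hx
  refine ⟨hnonneg, fun x hx y hxy => hanti hx (hx.trans_le hxy) hxy, fun x hx => ?_, ?_⟩
  · obtain ⟨hint, hle⟩ := integrableOn_Ioi_and_integral_le_of_hasDerivAt_neg hFd
      (continuousOn_const.mul hg) hg0 hnonneg hx
    rw [integral_const_mul] at hle
    exact ⟨(integrable_const_mul_iff (by positivity : (2 * l : ℝ) ≠ 0).isUnit g).1 hint, hle⟩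
  · refine fun x hx y hxy => monotoneOn_Ioi_of_hasDerivAt_nonneg hη1 (fun y hy => ?_) hx
      (hx.trans_le hxy) hxy
    rw [← flux_mul_exp η' Q y]
    exact mul_nonneg (hnonneg y hy) (Real.exp_pos _).le

/-- Assume `Q(x) → +∞` as `x → ∞`, let `λ > 0`, and let `η : (0,∞) → ℝ`
be a strictly positive `C²` function satisfying `η'' − 2qη' = −2λη` on `(0,∞)`.
Then `F(x) := η'(x)e^{−Q(x)}` is nonnegative and nonincreasing on `(0,∞)`, for every `x > 0`
the integral `∫ₓ^∞ η e^{−Q}` is finite and `2λ∫ₓ^∞ η(y)e^{−Q(y)} dy ≤ F(x)`, and `η` is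
nondecreasing on `(0,∞)`. -/
theorem flux_nonneg_antitone_and_eta_monotone (q q' Q : ℝ → ℝ) (l : ℝ) (η η' η'' : ℝ → ℝ)
    (hqderiv : ∀ x ∈ Set.Ioi (0:ℝ), HasDerivAt q (q' x) x)
    (hqcont : ContinuousOn q' (Set.Ioi 0))
    (hQ : ∀ x ∈ Set.Ioi (0:ℝ), Q x = 2 * ∫ u in (1:ℝ)..x, q u)
    (hQtop : Tendsto Q atTop atTop)
    (hl : 0 < l)
    (hη1 : ∀ x ∈ Set.Ioi (0:ℝ), HasDerivAt η (η' x) x)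
    (hη2 : ∀ x ∈ Set.Ioi (0:ℝ), HasDerivAt η' (η'' x) x)
    (hη'' : ContinuousOn η'' (Set.Ioi 0))
    (hηpos : ∀ x ∈ Set.Ioi (0:ℝ), 0 < η x)
    (hODE : ∀ x ∈ Set.Ioi (0:ℝ), η'' x - 2 * q x * η' x = -2 * l * η x) :
    (∀ x ∈ Set.Ioi (0:ℝ), 0 ≤ η' x * Real.exp (-(Q x))) ∧
    (∀ x ∈ Set.Ioi (0:ℝ), ∀ y, x ≤ y →
      η' y * Real.exp (-(Q y)) ≤ η' x * Real.exp (-(Q x))) ∧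
    (∀ x ∈ Set.Ioi (0:ℝ),
      MeasureTheory.IntegrableOn (fun y => η y * Real.exp (-(Q y))) (Set.Ioi x) ∧
      2 * l * ∫ y in Set.Ioi x, η y * Real.exp (-(Q y)) ≤ η' x * Real.exp (-(Q x))) ∧
    (∀ x ∈ Set.Ioi (0:ℝ), ∀ y, x ≤ y → η x ≤ η y) :=
  flux_nonneg_antitone_and_eta_monotone_general q q' Q l η η' η'' hqderiv hQ hQtop hl hη1 hη2 hηpos
    hODE
end

section
/- Assume Q(x) → +∞ as x → ∞, let λ > 0, and let η : (0,∞) → ℝ be a strictly positive C² function satisfying η''(x) − 2q(x)η'(x) = −2λη(x) for all x > 0. Then ∫₁^∞ e^{−Q(y)} dy < ∞ and ∫₁^∞ η(y) e^{−Q(y)} dy < ∞. -/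
open Filter Set Topology MeasureTheory

/-!
The function `F = η' e^{-Q}` satisfies `F' = -2λ η e^{-Q} < 0`, so it decreases. If `F` ever
became negative, then, since `e^{Q} ≥ 1` for large `x`, `η'` would eventually stay below a negative
constant and `η` would become negative; hence `F ≥ 0`. Therefore `∫₁ˣ η e^{-Q} = (F 1 - F x)/(2λ)`
is bounded by `F 1 / (2λ)`, and `η' ≥ 0` gives `η ≥ η 1 > 0` on `[1, ∞)`, so `η e^{-Q} / η 1`
dominates `e^{-Q}`.
-/

theorem hasDerivAt_intervalIntegral_of_continuousOn {f : ℝ → ℝ} {s : Set ℝ} {a x : ℝ}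
    (hs : IsOpen s) (hs' : s.OrdConnected) (hf : ContinuousOn f s) (ha : a ∈ s) (hx : x ∈ s) :
    HasDerivAt (fun t => ∫ u in a..t, f u) (f x) x :=
  intervalIntegral.integral_hasDerivAt_right
    ((hf.mono (hs'.uIcc_subset ha hx)).intervalIntegrable)
    (hf.stronglyMeasurableAtFilter hs x hx) (hf.continuousAt (hs.mem_nhds hx))

theorem tendsto_atBot_of_hasDerivAt_le_neg {f f' : ℝ → ℝ} {R c : ℝ} (hc : c < 0)
    (hf : ∀ x ∈ Ici R, HasDerivAt f (f' x) x) (hf' : ∀ x ∈ Ici R, f' x ≤ c) :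
    Tendsto f atTop atBot := by
  have hlin : ∀ x ∈ Ici R, f x ≤ f R + c * (x - R) := by
    intro x hx
    have := (convex_Ici R).image_sub_le_mul_sub_of_deriv_le
      (fun y hy => (hf y hy).continuousAt.continuousWithinAt)
      (fun y hy => (hf y (interior_subset hy)).differentiableAt.differentiableWithinAt)
      (fun y hy => (hf y (interior_subset hy)).deriv ▸ hf' y (interior_subset hy))
      R self_mem_Ici x hx hx
    linarith
  refine tendsto_atBot_mono' _ (eventually_ge_atTop R |>.mono hlin) ?_
  exact tendsto_atBot_add_const_left _ _
    ((tendsto_id.atTop_add tendsto_const_nhds).const_mul_atTop_of_neg hc)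

theorem integrableOn_Ioi_deriv_of_nonpos_of_le {g g' : ℝ → ℝ} {a C : ℝ}
    (hderiv : ∀ x ∈ Ici a, HasDerivAt g (g' x) x) (hg' : ∀ x ∈ Ioi a, g' x ≤ 0)
    (hC : ∀ x ∈ Ioi a, C ≤ g x) : IntegrableOn g' (Ioi a) := by
  have hcont : ∀ b, ContinuousOn g (Icc a b) := fun b x hx =>
    (hderiv x hx.1).continuousAt.continuousWithinAt
  have hIoc : ∀ b, IntegrableOn g' (Ioc a b) := fun b =>
    (intervalIntegral.integrableOn_deriv_of_nonneg (hcont b).neg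
      (fun x hx => (hderiv x hx.1.le).neg) (fun x hx => neg_nonneg.2 (hg' x hx.1))).neg.congr_fun
      (fun x _ => neg_neg _) measurableSet_Ioc
  refine integrableOn_Ioi_of_intervalIntegral_norm_bounded (g a - C) a hIoc tendsto_id ?_
  filter_upwards [Ioi_mem_atTop a] with b hb
  calc ∫ x in a..b, ‖g' x‖ = -∫ x in a..b, g' x := by
        rw [← intervalIntegral.integral_neg]
        refine intervalIntegral.integral_congr_ae ?_
        filter_upwards with x hx
        rw [uIoc_of_le hb.le] at hx
        exact Real.norm_of_nonpos (hg' x hx.1)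
    _ = g a - g b := by
        rw [intervalIntegral.integral_eq_sub_of_hasDerivAt_of_le hb.le (hcont b)
          (fun x hx => hderiv x hx.1.le)
          ((intervalIntegrable_iff_integrableOn_Ioc_of_le hb.le).2 (hIoc b))]
        ring
    _ ≤ g a - C := by linarith [hC b hb]

theorem MeasureTheory.IntegrableOn.of_mul_of_const_le {f g : ℝ → ℝ} {s : Set ℝ} {c : ℝ}
    (hfg : IntegrableOn (fun x => f x * g x) s) (hg : AEStronglyMeasurable g (volume.restrict s))
    (hs : MeasurableSet s) (hc : 0 < c) (hf : ∀ x ∈ s, c ≤ f x) : IntegrableOn g s := by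
  refine Integrable.mono' (hfg.norm.const_mul c⁻¹) hg ?_
  rw [ae_restrict_iff' hs]
  filter_upwards with x hx
  rw [norm_mul, ← mul_assoc, Real.norm_of_nonneg (hc.trans_le (hf x hx)).le]
  exact le_mul_of_one_le_left (norm_nonneg _) ((one_le_inv_mul₀ hc).2 (hf x hx))

theorem hasDerivAt_mul_exp_neg_of_ode {q Q η η' η'' : ℝ → ℝ} {l x : ℝ}
    (hQ : HasDerivAt Q (2 * q x) x) (hη' : HasDerivAt η' (η'' x) x)
    (hode : η'' x - 2 * q x * η' x = -2 * l * η x) :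
    HasDerivAt (fun y => η' y * Real.exp (-Q y)) (-(2 * l) * (η x * Real.exp (-Q x))) x :=
  (hη'.mul hQ.neg.exp).congr_deriv (by linear_combination Real.exp (-Q x) * hode)

theorem nonneg_of_antitoneOn_mul_exp_neg {η η' Q : ℝ → ℝ} {a x : ℝ}
    (hη : ∀ y ∈ Ioi a, HasDerivAt η (η' y) y) (hηpos : ∀ y ∈ Ioi a, 0 < η y)
    (hQ : Tendsto Q atTop atTop) (hF : AntitoneOn (fun y => η' y * Real.exp (-Q y)) (Ioi a))
    (hx : a < x) : 0 ≤ η' x * Real.exp (-Q x) := by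
  by_contra! hneg
  obtain ⟨R, hR⟩ := (hQ.eventually (eventually_ge_atTop 0)).exists_forall_of_atTop
  have hη'_le : ∀ y ∈ Ici (max R x), η' y ≤ η' x * Real.exp (-Q x) := by
    intro y hy
    have hxy : x ≤ y := le_of_max_le_right hy
    have hexp : 1 ≤ Real.exp (Q y) := Real.one_le_exp (hR y (le_of_max_le_left hy))
    calc η' y = η' y * Real.exp (-Q y) * Real.exp (Q y) := by
          rw [mul_assoc, ← Real.exp_add, neg_add_cancel, Real.exp_zero, mul_one]
      _ ≤ η' x * Real.exp (-Q x) * Real.exp (Q y) :=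
          mul_le_mul_of_nonneg_right (hF hx (hx.trans_le hxy) hxy) (Real.exp_pos _).le
      _ ≤ η' x * Real.exp (-Q x) := by nlinarith
  have hη_bot := tendsto_atBot_of_hasDerivAt_le_neg hneg
    (fun y hy => hη y (hx.trans_le (le_of_max_le_right hy))) hη'_le
  obtain ⟨y, hy_neg, hy⟩ := ((hη_bot.eventually (eventually_lt_atBot 0)).and
    (eventually_gt_atTop a)).exists
  exact (hηpos y hy).not_gt hy_neg

theorem speed_measure_and_eta_integrable_at_infinity_general (q q' Q : ℝ → ℝ) (l : ℝ)
    (η η' η'' : ℝ → ℝ)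
    (hqderiv : ∀ x ∈ Set.Ioi (0:ℝ), HasDerivAt q (q' x) x)
    (hQ : ∀ x ∈ Set.Ioi (0:ℝ), Q x = 2 * ∫ u in (1:ℝ)..x, q u)
    (hQtop : Tendsto Q atTop atTop)
    (hl : 0 < l)
    (hη1 : ∀ x ∈ Set.Ioi (0:ℝ), HasDerivAt η (η' x) x)
    (hη2 : ∀ x ∈ Set.Ioi (0:ℝ), HasDerivAt η' (η'' x) x)
    (hηpos : ∀ x ∈ Set.Ioi (0:ℝ), 0 < η x)
    (hODE : ∀ x ∈ Set.Ioi (0:ℝ), η'' x - 2 * q x * η' x = -2 * l * η x) :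
    MeasureTheory.IntegrableOn (fun y => Real.exp (-(Q y))) (Set.Ioi 1) ∧
    MeasureTheory.IntegrableOn (fun y => η y * Real.exp (-(Q y))) (Set.Ioi 1) := by
  have hqc : ContinuousOn q (Ioi 0) := fun x hx => (hqderiv x hx).continuousAt.continuousWithinAt
  have hQ' : ∀ x ∈ Ioi (0:ℝ), HasDerivAt Q (2 * q x) x := fun x hx =>
    ((hasDerivAt_intervalIntegral_of_continuousOn isOpen_Ioi ordConnected_Ioi hqc
      (mem_Ioi.2 one_pos) hx).const_mul 2).congr_of_eventuallyEq
      (eventually_of_mem (isOpen_Ioi.mem_nhds hx) hQ)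
  have hF' : ∀ x ∈ Ioi (0:ℝ), HasDerivAt (fun y => η' y * Real.exp (-Q y))
      (-(2 * l) * (η x * Real.exp (-Q x))) x := fun x hx =>
    hasDerivAt_mul_exp_neg_of_ode (hQ' x hx) (hη2 x hx) (hODE x hx)
  have hF'_neg : ∀ x ∈ Ioi (0:ℝ), -(2 * l) * (η x * Real.exp (-Q x)) ≤ 0 := fun x hx =>
    mul_nonpos_of_nonpos_of_nonneg (by linarith) (mul_pos (hηpos x hx) (Real.exp_pos _)).le
  have hF_nonneg : ∀ x ∈ Ioi (0:ℝ), 0 ≤ η' x * Real.exp (-Q x) := fun x hx =>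
    nonneg_of_antitoneOn_mul_exp_neg hη1 hηpos hQtop
      (antitoneOn_Ioi_of_hasDerivAt_nonpos hF' hF'_neg) hx
  have hηmono : MonotoneOn η (Ioi 0) := monotoneOn_Ioi_of_hasDerivAt_nonneg hη1 fun x hx =>
    (mul_nonneg_iff_of_pos_right (Real.exp_pos _)).1 (hF_nonneg x hx)
  have h1 : Ioi (1:ℝ) ⊆ Ioi 0 := Ioi_subset_Ioi zero_le_one
  have hInt : IntegrableOn (fun y => η y * Real.exp (-Q y)) (Ioi 1) :=
    (integrable_const_mul_iff (IsUnit.mk0 _ (by linarith)) _).1 <|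
      integrableOn_Ioi_deriv_of_nonpos_of_le (fun x hx => hF' x (Ici_subset_Ioi.2 one_pos hx))
        (fun x hx => hF'_neg x (h1 hx)) (fun x hx => hF_nonneg x (h1 hx))
  have hexp_cont : ContinuousOn (fun y => Real.exp (-Q y)) (Ioi 1) := fun x hx =>
    (hQ' x (h1 hx)).continuousAt.neg.rexp.continuousWithinAt
  exact ⟨hInt.of_mul_of_const_le (hexp_cont.aestronglyMeasurable measurableSet_Ioi)
    measurableSet_Ioi (hηpos 1 (mem_Ioi.2 one_pos)) fun y hy =>
      hηmono (mem_Ioi.2 one_pos) (h1 hy) hy.le, hInt⟩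

/-- Assume `Q(x) → +∞` as `x → ∞`, let `λ > 0`, and let `η : (0,∞) → ℝ`
be a strictly positive `C²` function satisfying `η'' − 2qη' = −2λη` on `(0,∞)`.
Then `∫₁^∞ e^{−Q(y)} dy < ∞` and `∫₁^∞ η(y) e^{−Q(y)} dy < ∞`. -/
theorem speed_measure_and_eta_integrable_at_infinity (q q' Q : ℝ → ℝ) (l : ℝ)
    (η η' η'' : ℝ → ℝ)
    (hqderiv : ∀ x ∈ Set.Ioi (0:ℝ), HasDerivAt q (q' x) x)
    (hqcont : ContinuousOn q' (Set.Ioi 0))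
    (hQ : ∀ x ∈ Set.Ioi (0:ℝ), Q x = 2 * ∫ u in (1:ℝ)..x, q u)
    (hQtop : Tendsto Q atTop atTop)
    (hl : 0 < l)
    (hη1 : ∀ x ∈ Set.Ioi (0:ℝ), HasDerivAt η (η' x) x)
    (hη2 : ∀ x ∈ Set.Ioi (0:ℝ), HasDerivAt η' (η'' x) x)
    (hη'' : ContinuousOn η'' (Set.Ioi 0))
    (hηpos : ∀ x ∈ Set.Ioi (0:ℝ), 0 < η x)
    (hODE : ∀ x ∈ Set.Ioi (0:ℝ), η'' x - 2 * q x * η' x = -2 * l * η x) :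
    MeasureTheory.IntegrableOn (fun y => Real.exp (-(Q y))) (Set.Ioi 1) ∧
    MeasureTheory.IntegrableOn (fun y => η y * Real.exp (-(Q y))) (Set.Ioi 1) :=
  speed_measure_and_eta_integrable_at_infinity_general q q' Q l η η' η'' hqderiv hQ hQtop hl hη1 hη2
    hηpos hODE
end

section
/- Let q : (0,∞) → ℝ be C¹ and let a > 0 be such that q(x) > 0 and q²(x) − q'(x) ≥ 1 for all x ≥ a. Then ∫ₐ^∞ e^{−Q(x)} dx ≤ q(a) e^{−Q(a)} < ∞. -/
open Filter Set Topology MeasureTheory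

/-!
With `E = exp (-Q)` and `Q' = 2q`, the function `g = -q E` has derivative
`(2q² - q') E ≥ (q² - q') E ≥ E` on `[a, ∞)`, and `g ≤ 0` there because `q > 0`.
So `g` increases to a limit `≤ 0`, and `∫ₐ^∞ E ≤ ∫ₐ^∞ g' ≤ 0 - g a = q(a) E(a)`.
-/

lemma MonotoneOn.exists_tendsto_atTop_of_le {g : ℝ → ℝ} {a B : ℝ}
    (hg : MonotoneOn g (Ici a)) (hB : ∀ x ∈ Ici a, g x ≤ B) : ∃ l ≤ B, Tendsto g atTop (𝓝 l) := by
  set G : ℝ → ℝ := fun x => g (max x a)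
  have hG_mono : Monotone G := fun x y hxy =>
    hg (le_max_right x a) (le_max_right y a) (max_le_max hxy le_rfl)
  have hG_le : ∀ x, G x ≤ B := fun x => hB _ (le_max_right x a)
  refine ⟨⨆ x, G x, ciSup_le hG_le, ?_⟩
  refine (tendsto_atTop_ciSup hG_mono ⟨B, ?_⟩).congr' ?_
  · rintro _ ⟨x, rfl⟩
    exact hG_le x
  · filter_upwards [eventually_ge_atTop a] with x hx
    simp only [G, max_eq_left hx]

lemma integrableOn_Ioi_deriv_and_integral_le_of_nonneg_of_le {g φ : ℝ → ℝ} {a B : ℝ}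
    (hderiv : ∀ x ∈ Ici a, HasDerivAt g (φ x) x) (hφ : ∀ x ∈ Ioi a, 0 ≤ φ x)
    (hB : ∀ x ∈ Ici a, g x ≤ B) :
    IntegrableOn φ (Ioi a) ∧ ∫ x in Ioi a, φ x ≤ B - g a := by
  have hmono : MonotoneOn g (Ici a) :=
    monotoneOn_of_hasDerivWithinAt_nonneg (convex_Ici a)
      (fun x hx => (hderiv x hx).continuousAt.continuousWithinAt)
      (fun x hx => (hderiv x (interior_subset hx)).hasDerivWithinAt)
      (fun x hx => hφ x (by rwa [interior_Ici] at hx))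
  obtain ⟨l, hlB, hl⟩ := hmono.exists_tendsto_atTop_of_le hB
  refine ⟨integrableOn_Ioi_deriv_of_nonneg' hderiv hφ hl, ?_⟩
  rw [integral_Ioi_of_hasDerivAt_of_nonneg' hderiv hφ hl]
  linarith

lemma integrableOn_Ioi_and_integral_le_of_le_deriv {f g φ : ℝ → ℝ} {a B : ℝ}
    (hf : AEStronglyMeasurable f (volume.restrict (Ioi a)))
    (hf0 : ∀ x ∈ Ioi a, 0 ≤ f x) (hfφ : ∀ x ∈ Ioi a, f x ≤ φ x)
    (hderiv : ∀ x ∈ Ici a, HasDerivAt g (φ x) x) (hB : ∀ x ∈ Ici a, g x ≤ B) :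
    IntegrableOn f (Ioi a) ∧ ∫ x in Ioi a, f x ≤ B - g a := by
  obtain ⟨hφ_int, hφ_le⟩ := integrableOn_Ioi_deriv_and_integral_le_of_nonneg_of_le hderiv
    (fun x hx => (hf0 x hx).trans (hfφ x hx)) hB
  have hf_int : IntegrableOn f (Ioi a) := by
    refine hφ_int.mono' hf ?_
    filter_upwards [ae_restrict_mem measurableSet_Ioi] with x hx
    rw [Real.norm_of_nonneg (hf0 x hx)]
    exact hfφ x hx
  exact ⟨hf_int, (setIntegral_mono_on hf_int hφ_int measurableSet_Ioi hfφ).trans hφ_le⟩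

lemma hasDerivAt_integral_of_continuousOn_Ioi {f : ℝ → ℝ} {c b x : ℝ}
    (hf : ContinuousOn f (Ioi c)) (hb : c < b) (hx : c < x) :
    HasDerivAt (fun u => ∫ t in b..u, f t) (f x) x := by
  have hsub : uIcc b x ⊆ Ioi c := fun y hy => by
    rcases mem_uIcc.1 hy with h | h
    · exact hb.trans_le h.1
    · exact hx.trans_le h.1
  exact intervalIntegral.integral_hasDerivAt_right ((hf.mono hsub).intervalIntegrable)
    (hf.stronglyMeasurableAtFilter isOpen_Ioi x hx) (hf.continuousAt (isOpen_Ioi.mem_nhds hx))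

lemma hasDerivAt_neg_mul_exp_neg {q Q : ℝ → ℝ} {d x : ℝ} (hq : HasDerivAt q d x)
    (hQ : HasDerivAt Q (2 * q x) x) :
    HasDerivAt (fun y => -(q y * Real.exp (-Q y))) ((2 * q x ^ 2 - d) * Real.exp (-Q x)) x := by
  refine ((hq.fun_mul (hQ.fun_neg.exp)).fun_neg).congr_deriv ?_
  ring

theorem speed_measure_tail_integrable_of_potential_ge_one_general (q q' Q : ℝ → ℝ) (a : ℝ)
    (hderiv : ∀ x ∈ Set.Ioi (0:ℝ), HasDerivAt q (q' x) x)
    (hQ : ∀ x ∈ Set.Ioi (0:ℝ), Q x = 2 * ∫ u in (1:ℝ)..x, q u)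
    (ha : 0 < a)
    (hqpos : ∀ x, a ≤ x → 0 < q x)
    (hq1 : ∀ x, a ≤ x → 1 ≤ (q x) ^ 2 - q' x) :
    MeasureTheory.IntegrableOn (fun x => Real.exp (-(Q x))) (Set.Ioi a) ∧
    ∫ x in Set.Ioi a, Real.exp (-(Q x)) ≤ q a * Real.exp (-(Q a)) := by
  have hq_cont : ContinuousOn q (Ioi 0) := fun x hx => (hderiv x hx).continuousAt.continuousWithinAt
  have hQ_deriv : ∀ x ∈ Ioi (0:ℝ), HasDerivAt Q (2 * q x) x := fun x hx =>
    ((hasDerivAt_integral_of_continuousOn_Ioi hq_cont one_pos hx).const_mul 2).congr_of_eventuallyEq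
      (eventually_of_mem (isOpen_Ioi.mem_nhds hx) hQ)
  have hIci_pos : ∀ x ∈ Ici a, x ∈ Ioi (0:ℝ) := fun x hx => ha.trans_le hx
  have hE_cont : ContinuousOn (fun x => Real.exp (-(Q x))) (Ioi a) := fun x hx =>
    (hQ_deriv x (hIci_pos x (mem_Ici.2 hx.out.le))).continuousAt.neg.rexp.continuousWithinAt
  have hE_le : ∀ x ∈ Ioi a, Real.exp (-(Q x)) ≤ (2 * q x ^ 2 - q' x) * Real.exp (-(Q x)) :=
    fun x hx => le_mul_of_one_le_left (Real.exp_pos _).le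
      (by linarith [hq1 x hx.le, sq_nonneg (q x)])
  have hg_nonpos : ∀ x ∈ Ici a, -(q x * Real.exp (-Q x)) ≤ 0 := fun x hx =>
    neg_nonpos.2 (mul_pos (hqpos x hx) (Real.exp_pos _)).le
  simpa only [zero_sub, neg_neg] using integrableOn_Ioi_and_integral_le_of_le_deriv
    (hE_cont.aestronglyMeasurable measurableSet_Ioi) (fun x _ => (Real.exp_pos _).le) hE_le
    (fun x hx => hasDerivAt_neg_mul_exp_neg (hderiv x (hIci_pos x hx)) (hQ_deriv x (hIci_pos x hx)))
    hg_nonpos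

/-- Let `q : (0,∞) → ℝ` be `C¹` and let `a > 0` be such that `q(x) > 0`
and `q²(x) − q'(x) ≥ 1` for all `x ≥ a`. Then `∫ₐ^∞ e^{−Q(x)} dx ≤ q(a) e^{−Q(a)} < ∞`. -/
theorem speed_measure_tail_integrable_of_potential_ge_one (q q' Q : ℝ → ℝ) (a : ℝ)
    (hderiv : ∀ x ∈ Set.Ioi (0:ℝ), HasDerivAt q (q' x) x)
    (hcont : ContinuousOn q' (Set.Ioi 0))
    (hQ : ∀ x ∈ Set.Ioi (0:ℝ), Q x = 2 * ∫ u in (1:ℝ)..x, q u)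
    (ha : 0 < a)
    (hqpos : ∀ x, a ≤ x → 0 < q x)
    (hq1 : ∀ x, a ≤ x → 1 ≤ (q x) ^ 2 - q' x) :
    MeasureTheory.IntegrableOn (fun x => Real.exp (-(Q x))) (Set.Ioi a) ∧
    ∫ x in Set.Ioi a, Real.exp (-(Q x)) ≤ q a * Real.exp (-(Q a)) :=
  speed_measure_tail_integrable_of_potential_ge_one_general q q' Q a hderiv hQ ha hqpos hq1
end

section
/- Let q : (0,∞) → ℝ be C¹ and suppose there exist x₀ ≥ 1 and q₀ > 0 such that: q(x) ≥ q₀ for all x ≥ x₀; limsup_{x→∞} q'(x)/(2q²(x)) < 1; and ∫_{x₀}^∞ dx/q(x) < ∞. Then ∫₁^∞ e^{Q(y)} (∫_y^∞ e^{−Q(z)} dz) dy < ∞, i.e. hypothesis (H5) holds. -/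
open Filter Set Topology MeasureTheory
open scoped ENNReal

/-!
Since `Q' = 2q`, Tonelli turns the double integral into `∫₁^∞ e^{-Q(z)} ∫₁^z e^{Q(y)} dy dz`.
Beyond a point `X` where `q'/(2q²) ≤ C < 1`, the function `e^Q/(2q)` has derivative
`e^Q (1 - q'/(2q²)) ≥ (1 - C) e^Q`, so `∫_X^z e^Q ≤ e^{Q(z)}/(2(1 - C) q(z))`. Hence the
integrand is at most a multiple of `1/q(z)` plus a multiple of `e^{-Q(z)}`, and the latter decays
exponentially because `q ≥ q₀ > 0`.
-/

theorem exists_lt_eventually_le_of_limsup_coe_lt {α : Type*} {l : Filter α} {f : α → ℝ} {b : ℝ}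
    (h : limsup (fun x => (f x : EReal)) l < b) : ∃ C < b, ∀ᶠ x in l, f x ≤ C := by
  obtain ⟨C, hlim, hCb⟩ := EReal.lt_iff_exists_real_btwn.1 h
  exact ⟨C, EReal.coe_lt_coe_iff.1 hCb,
    (eventually_lt_of_limsup_lt hlim).mono fun x hx => (EReal.coe_lt_coe_iff.1 hx).le⟩

theorem setLIntegral_Ioi_mul_setLIntegral_Ioi {μ : Measure ℝ} [SFinite μ] {f g : ℝ → ℝ≥0∞}
    {a : ℝ} (hf : AEMeasurable f (μ.restrict (Ioi a))) (hg : AEMeasurable g (μ.restrict (Ioi a))) :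
    ∫⁻ y in Ioi a, f y * ∫⁻ z in Ioi y, g z ∂μ ∂μ =
      ∫⁻ z in Ioi a, g z * ∫⁻ y in Ioo a z, f y ∂μ ∂μ := by
  have hinner : ∀ y ∈ Ioi a,
      f y * ∫⁻ z in Ioi y, g z ∂μ = ∫⁻ z in Ioi a, f y * (Ioi y).indicator g z ∂μ := by
    intro y hy
    rw [lintegral_const_mul'' _ (hg.indicator measurableSet_Ioi),
      lintegral_indicator measurableSet_Ioi, Measure.restrict_restrict measurableSet_Ioi,
      inter_eq_left.2 (Ioi_subset_Ioi (le_of_lt hy))]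
  have houter : ∀ z ∈ Ioi a,
      ∫⁻ y in Ioi a, f y * (Ioi y).indicator g z ∂μ = g z * ∫⁻ y in Ioo a z, f y ∂μ := by
    intro z _
    have hpt : (fun y => f y * (Ioi y).indicator g z) = fun y => (Iio z).indicator f y * g z := by
      ext y
      by_cases hyz : y < z <;> simp [hyz]
    rw [hpt, lintegral_mul_const'' _ (hf.indicator measurableSet_Iio), mul_comm,
      lintegral_indicator measurableSet_Iio, Measure.restrict_restrict measurableSet_Iio,
      Iio_inter_Ioi]
  have hmeas : AEMeasurable (Function.uncurry fun y z => f y * (Ioi y).indicator g z)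
      ((μ.restrict (Ioi a)).prod (μ.restrict (Ioi a))) :=
    hf.comp_fst.mul ((hg.comp_snd).indicator (measurableSet_lt measurable_fst measurable_snd))
  rw [setLIntegral_congr_fun measurableSet_Ioi hinner, lintegral_lintegral_swap hmeas,
    setLIntegral_congr_fun measurableSet_Ioi houter]

theorem hasDerivAt_integral_of_continuousOn {f : ℝ → ℝ} {s : Set ℝ} {b x : ℝ}
    (hf : ContinuousOn f s) (hs : s.OrdConnected) (hb : b ∈ s) (hx : s ∈ 𝓝 x) :
    HasDerivAt (fun t => ∫ u in b..t, f u) (f x) x :=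
  intervalIntegral.integral_hasDerivAt_right
    ((hf.mono (hs.uIcc_subset hb (mem_of_mem_nhds hx))).intervalIntegrable)
    ((hf.mono interior_subset).stronglyMeasurableAtFilter isOpen_interior x
      (mem_interior_iff_mem_nhds.2 hx))
    (hf.continuousAt hx)

theorem integrableOn_Ioi_exp_neg_of_le_deriv {f f' : ℝ → ℝ} {a c : ℝ} (hc : 0 < c)
    (hf : ∀ x ∈ Ici a, HasDerivAt f (f' x) x) (hle : ∀ x ∈ Ici a, c ≤ f' x) :
    IntegrableOn (fun x => Real.exp (-f x)) (Ioi a) := by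
  have hcont : ContinuousOn f (Ici a) := fun x hx => (hf x hx).continuousAt.continuousWithinAt
  have hgrowth : ∀ x ∈ Ici a, c * (x - a) ≤ f x - f a :=
    fun x hx => (convex_Ici a).mul_sub_le_image_sub_of_le_deriv hcont
      (fun y hy => (hf y (interior_subset hy)).differentiableAt.differentiableWithinAt)
      (fun y hy => (hf y (interior_subset hy)).deriv ▸ hle y (interior_subset hy))
      a self_mem_Ici x hx hx
  refine Integrable.mono' ((exp_neg_integrableOn_Ioi a hc).const_mul (Real.exp (c * a - f a)))
    ((hcont.mono Ioi_subset_Ici_self).neg.rexp.aestronglyMeasurable measurableSet_Ioi) ?_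
  filter_upwards [ae_restrict_mem measurableSet_Ioi] with x hx
  rw [Real.norm_of_nonneg (Real.exp_pos _).le, ← Real.exp_add, Real.exp_le_exp]
  linarith [hgrowth x (mem_Ici.2 (le_of_lt hx))]

theorem hasDerivAt_exp_div_two_mul {q R : ℝ → ℝ} {x q'x : ℝ} (hR : HasDerivAt R (2 * q x) x)
    (hq : HasDerivAt q q'x x) (hx : q x ≠ 0) :
    HasDerivAt (fun t => Real.exp (R t) / (2 * q t))
      (Real.exp (R x) * (1 - q'x / (2 * q x ^ 2))) x := by
  refine (hR.exp.div (hq.const_mul 2) (mul_ne_zero two_ne_zero hx)).congr_deriv ?_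
  field_simp

section Lyapunov

variable {q q' R : ℝ → ℝ} {C X : ℝ}
  (hR : ∀ x ∈ Ici X, HasDerivAt R (2 * q x) x) (hq : ∀ x ∈ Ici X, HasDerivAt q (q' x) x)
  (hpos : ∀ x ∈ Ici X, 0 < q x) (hratio : ∀ x ∈ Ici X, q' x / (2 * q x ^ 2) ≤ C)
include hR hq hpos hratio

theorem one_sub_mul_integral_exp_le {z : ℝ} (hz : X ≤ z) :
    (1 - C) * ∫ x in X..z, Real.exp (R x) ≤
      Real.exp (R z) / (2 * q z) - Real.exp (R X) / (2 * q X) := by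
  have hRcont : ContinuousOn (fun x => Real.exp (R x)) (Icc X z) :=
    fun x hx => (hR x hx.1).continuousAt.rexp.continuousWithinAt
  rw [← intervalIntegral.integral_const_mul]
  refine intervalIntegral.integral_le_sub_of_hasDeriv_right_of_le hz
    (fun x hx => (hasDerivAt_exp_div_two_mul (hR x hx.1) (hq x hx.1)
      (hpos x hx.1).ne').continuousAt.continuousWithinAt)
    (fun x hx => (hasDerivAt_exp_div_two_mul (hR x hx.1.le) (hq x hx.1.le)
      (hpos x hx.1.le).ne').hasDerivWithinAt)
    (hRcont.const_smul (1 - C)).integrableOn_Icc fun x hx => ?_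
  rw [mul_comm]
  exact mul_le_mul_of_nonneg_left (by linarith [hratio x hx.1.le]) (Real.exp_pos _).le

theorem integrableOn_Ioi_exp_neg_mul_integral_exp (hC : C < 1)
    (hint : IntegrableOn (fun x => 1 / q x) (Ioi X)) :
    IntegrableOn (fun z => Real.exp (-R z) * ∫ x in X..z, Real.exp (R x)) (Ioi X) := by
  have hRcont : ContinuousOn R (Ici X) := fun x hx => (hR x hx).continuousAt.continuousWithinAt
  have hcont : ContinuousOn (fun z => Real.exp (-R z) * ∫ x in X..z, Real.exp (R x)) (Ioi X) :=
    fun z hz => ((hR z (mem_Ici_of_Ioi hz)).continuousAt.neg.rexp.mul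
      (hasDerivAt_integral_of_continuousOn hRcont.rexp ordConnected_Ici self_mem_Ici
        (Ici_mem_nhds hz)).continuousAt).continuousWithinAt
  refine Integrable.mono' (hint.const_mul (1 / (2 * (1 - C))))
    (hcont.aestronglyMeasurable measurableSet_Ioi) ?_
  filter_upwards [ae_restrict_mem measurableSet_Ioi] with z hz
  have hXz : X ≤ z := le_of_lt hz
  have hI : 0 ≤ ∫ x in X..z, Real.exp (R x) :=
    intervalIntegral.integral_nonneg hXz fun _ _ => (Real.exp_pos _).le
  have hX_nonneg : 0 ≤ Real.exp (R X) / (2 * q X) :=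
    div_nonneg (Real.exp_pos _).le (by linarith [hpos X self_mem_Ici])
  have hbound := one_sub_mul_integral_exp_le hR hq hpos hratio hXz
  rw [Real.norm_of_nonneg (mul_nonneg (Real.exp_pos _).le hI), Real.exp_neg,
    inv_mul_le_iff₀ (Real.exp_pos _)]
  calc ∫ x in X..z, Real.exp (R x)
      = (1 - C) * (∫ x in X..z, Real.exp (R x)) / (1 - C) := by field_simp [(sub_pos.2 hC).ne']
    _ ≤ Real.exp (R z) / (2 * q z) / (1 - C) := by gcongr; linarith
    _ = Real.exp (R z) * (1 / (2 * (1 - C)) * (1 / q z)) := by field_simp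

end Lyapunov

theorem integrableOn_Ioi_exp_neg_mul_integral_exp_of_le {q q' R : ℝ → ℝ} {a C X q₀ : ℝ}
    (hR : ∀ x ∈ Ici X, HasDerivAt R (2 * q x) x) (hq : ∀ x ∈ Ici X, HasDerivAt q (q' x) x)
    (hratio : ∀ x ∈ Ici X, q' x / (2 * q x ^ 2) ≤ C) (hC : C < 1) (hq₀ : 0 < q₀)
    (hlower : ∀ x ∈ Ici X, q₀ ≤ q x) (hint : IntegrableOn (fun x => 1 / q x) (Ioi X))
    (haX : a ≤ X) (hRa : ContinuousOn R (Ici a)) :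
    IntegrableOn (fun z => Real.exp (-R z) * ∫ x in a..z, Real.exp (R x)) (Ioi a) := by
  have hpos : ∀ x ∈ Ici X, 0 < q x := fun x hx => hq₀.trans_le (hlower x hx)
  have hexp : ContinuousOn (fun x => Real.exp (R x)) (Ici a) := hRa.rexp
  have hhead : IntegrableOn (fun z => Real.exp (-R z) * ∫ x in a..z, Real.exp (R x)) (Ioc a X) := by
    refine (ContinuousOn.integrableOn_Icc (μ := volume) ?_).mono_set Ioc_subset_Icc_self
    have hprim := intervalIntegral.continuousOn_primitive_interval
      ((hexp.mono (ordConnected_Ici.uIcc_subset self_mem_Ici haX)).integrableOn_compact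
        (μ := volume) isCompact_uIcc)
    rw [uIcc_of_le haX] at hprim
    exact (hRa.mono Icc_subset_Ici_self).neg.rexp.mul hprim
  have htail : IntegrableOn (fun z => Real.exp (-R z) * ∫ x in a..z, Real.exp (R x)) (Ioi X) := by
    have hdecay := integrableOn_Ioi_exp_neg_of_le_deriv (mul_pos two_pos hq₀) hR
      fun x hx => by linarith [hlower x hx]
    refine IntegrableOn.congr_fun ((hdecay.mul_const (∫ x in a..X, Real.exp (R x))).add
      (integrableOn_Ioi_exp_neg_mul_integral_exp hR hq hpos hratio hC hint))
      (fun z hz => ?_) measurableSet_Ioi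
    have hXa : X ∈ Ici a := haX
    have hza : z ∈ Ici a := haX.trans (le_of_lt hz)
    rw [Pi.add_apply, ← mul_add, intervalIntegral.integral_add_adjacent_intervals
      ((hexp.mono (ordConnected_Ici.uIcc_subset self_mem_Ici hXa)).intervalIntegrable)
      ((hexp.mono (ordConnected_Ici.uIcc_subset hXa hza)).intervalIntegrable)]
  simpa only [Ioc_union_Ioi_eq_Ioi haX] using hhead.union htail

theorem setLIntegral_Ioo_ofReal {f : ℝ → ℝ} {a b : ℝ} (hab : a ≤ b)
    (hf : IntegrableOn f (Ioo a b)) (hnonneg : ∀ x ∈ Ioo a b, 0 ≤ f x) :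
    ∫⁻ x in Ioo a b, ENNReal.ofReal (f x) = ENNReal.ofReal (∫ x in a..b, f x) := by
  rw [intervalIntegral.integral_of_le hab, integral_Ioc_eq_integral_Ioo,
    ofReal_integral_eq_lintegral_ofReal hf (ae_restrict_of_forall_mem measurableSet_Ioo hnonneg)]

theorem H5_of_integrable_inverse_drift_general (q q' Q : ℝ → ℝ) (x₀ q₀ : ℝ)
    (hderiv : ∀ x ∈ Set.Ioi (0:ℝ), HasDerivAt q (q' x) x)
    (hQ : ∀ x ∈ Set.Ioi (0:ℝ), Q x = 2 * ∫ u in (1:ℝ)..x, q u)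
    (hq₀ : 0 < q₀)
    (hlower : ∀ x, x₀ ≤ x → q₀ ≤ q x)
    (hlimsup : Filter.limsup (fun x => ((q' x / (2 * (q x) ^ 2) : ℝ) : EReal)) atTop < 1)
    (hint : MeasureTheory.IntegrableOn (fun x => 1 / q x) (Set.Ici x₀)) :
    ∫⁻ y in Set.Ioi (1:ℝ),
        ENNReal.ofReal (Real.exp (Q y)) *
          ∫⁻ z in Set.Ioi y, ENNReal.ofReal (Real.exp (-(Q z))) < ⊤ := by
  have hqcont : ContinuousOn q (Ioi 0) := fun x hx => (hderiv x hx).continuousAt.continuousWithinAt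
  have hQderiv : ∀ x ∈ Ioi (0:ℝ), HasDerivAt Q (2 * q x) x := fun x hx =>
    ((hasDerivAt_integral_of_continuousOn hqcont ordConnected_Ioi (mem_Ioi.2 one_pos)
      (Ioi_mem_nhds hx)).const_mul 2).congr_of_eventuallyEq (eventually_of_mem (Ioi_mem_nhds hx) hQ)
  have hQcont : ContinuousOn Q (Ioi 0) := fun x hx => (hQderiv x hx).continuousAt.continuousWithinAt
  obtain ⟨C, hC, hratio⟩ := exists_lt_eventually_le_of_limsup_coe_lt hlimsup
  obtain ⟨X, hX⟩ := eventually_atTop.1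
    (hratio.and ((eventually_ge_atTop x₀).and (eventually_ge_atTop 1)))
  obtain ⟨-, hX₀, hX1⟩ := hX X le_rfl
  have hXpos : ∀ x ∈ Ici X, x ∈ Ioi (0:ℝ) := fun x hx => one_pos.trans_le (hX1.trans hx)
  have hintegrable := integrableOn_Ioi_exp_neg_mul_integral_exp_of_le
    (fun x hx => hQderiv x (hXpos x hx)) (fun x hx => hderiv x (hXpos x hx))
    (fun x hx => (hX x hx).1) hC hq₀ (fun x hx => hlower x (hX₀.trans hx))
    (hint.mono_set (Ioi_subset_Ici hX₀)) hX1 (hQcont.mono (Ici_subset_Ioi.2 one_pos))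
  have hQcont1 : ContinuousOn Q (Ioi 1) := hQcont.mono (Ioi_subset_Ioi zero_le_one)
  rw [setLIntegral_Ioi_mul_setLIntegral_Ioi
    (hQcont1.rexp.aemeasurable measurableSet_Ioi).ennreal_ofReal
    (hQcont1.fun_neg.rexp.aemeasurable measurableSet_Ioi).ennreal_ofReal]
  refine lt_of_eq_of_lt (setLIntegral_congr_fun measurableSet_Ioi fun z hz => ?_)
    hintegrable.lintegral_lt_top
  rw [setLIntegral_Ioo_ofReal (le_of_lt hz) ?_ fun _ _ => (Real.exp_pos _).le,
    ← ENNReal.ofReal_mul (Real.exp_pos _).le]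
  exact (hQcont.mono ((Icc_subset_Ioi_iff (le_of_lt hz)).2 one_pos)).rexp.integrableOn_Icc.mono_set
    Ioo_subset_Icc_self

/-- Let `q : (0,∞) → ℝ` be `C¹` and suppose there exist `x₀ ≥ 1` and
`q₀ > 0` such that `q(x) ≥ q₀` for all `x ≥ x₀`, `limsup_{x→∞} q'(x)/(2q²(x)) < 1`, and
`∫_{x₀}^∞ dx/q(x) < ∞`. Then `∫₁^∞ e^{Q(y)} (∫_y^∞ e^{−Q(z)} dz) dy < ∞`,
i.e. hypothesis (H5) holds. -/
theorem H5_of_integrable_inverse_drift (q q' Q : ℝ → ℝ) (x₀ q₀ : ℝ)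
    (hderiv : ∀ x ∈ Set.Ioi (0:ℝ), HasDerivAt q (q' x) x)
    (hcont : ContinuousOn q' (Set.Ioi 0))
    (hQ : ∀ x ∈ Set.Ioi (0:ℝ), Q x = 2 * ∫ u in (1:ℝ)..x, q u)
    (hx₀ : 1 ≤ x₀) (hq₀ : 0 < q₀)
    (hlower : ∀ x, x₀ ≤ x → q₀ ≤ q x)
    (hlimsup : Filter.limsup (fun x => ((q' x / (2 * (q x) ^ 2) : ℝ) : EReal)) atTop < 1)
    (hint : MeasureTheory.IntegrableOn (fun x => 1 / q x) (Set.Ici x₀)) :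
    ∫⁻ y in Set.Ioi (1:ℝ),
        ENNReal.ofReal (Real.exp (Q y)) *
          ∫⁻ z in Set.Ioi y, ENNReal.ofReal (Real.exp (-(Q z))) < ⊤ :=
  H5_of_integrable_inverse_drift_general q q' Q x₀ q₀ hderiv hQ hq₀ hlower hlimsup hint
end

section
/- Let γ > 0 and let h : [0,∞) → ℝ be C¹ with h(0) = 0, lim_{x→∞} h(x)/√x = −∞ and lim_{x→∞} x·h'(x)/h(x)² = 0. Define q(x) := 1/(2x) − (2/(γx))·h(γx²/4) for x > 0. Then lim_{x→0⁺} x²·(q²(x) − q'(x)) = 3/4; moreover inf_{x>0}(q²(x) − q'(x)) > −∞ and q²(x) − q'(x) → +∞ as x → ∞, i.e. hypothesis (H2) holds. -/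
open Filter Set Topology

/-!
In the Feller variable `u = γx²/4` one computes `q² − q' = 3/(4x²) + R(u)` with
`R(u) = h'(u) − h(u)/u + h(u)²/(γu)`. As `u → 0⁺`, `u R(u) = u h'(u) − h(u) + h(u)²/γ → 0`
because `h(0) = 0` and `h'` stays bounded, which gives the limit `3/4`. As `u → ∞`, eventually
`h(u) ≤ −√u`, so `−h(u)/u ≥ 0` and `h(u)² ≥ u > 0`, while `u h'(u) ≥ −h(u)²/(2γ)`; hence
`R(u) ≥ (h(u)/√u)²/(2γ) → ∞`. Being continuous on `(0, ∞)` and eventually nonnegative at both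
ends, `q² − q'` is bounded below.
-/

noncomputable def fellerRemainder (γ : ℝ) (h h' : ℝ → ℝ) (u : ℝ) : ℝ :=
  h' u - h u / u + h u ^ 2 / (γ * u)

section Drift

variable {γ : ℝ} {h h' q : ℝ → ℝ} {x : ℝ}

theorem hasDerivAt_feller_drift (hγ : γ ≠ 0) (hx : 0 < x)
    (hh : HasDerivAt h (h' (γ * x ^ 2 / 4)) (γ * x ^ 2 / 4))
    (hq : ∀ y ∈ Ioi (0:ℝ), q y = 1 / (2 * y) - (2 / (γ * y)) * h (γ * y ^ 2 / 4)) :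
    HasDerivAt q
      (-1 / (2 * x ^ 2) + 2 / (γ * x ^ 2) * h (γ * x ^ 2 / 4) - h' (γ * x ^ 2 / 4)) x := by
  have hu : HasDerivAt (fun y : ℝ => γ * y ^ 2 / 4) (γ * x / 2) x := by
    refine (((hasDerivAt_pow 2 x).const_mul γ).div_const 4).congr_deriv ?_
    push_cast
    ring
  have hinv : HasDerivAt (fun y : ℝ => y⁻¹) (-(x ^ 2)⁻¹) x := hasDerivAt_inv hx.ne'
  have hψ := (hinv.const_mul (1 / 2)).sub ((hinv.mul (hh.comp x hu)).const_mul (2 / γ))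
  have hq_eq : q =ᶠ[𝓝 x] fun y => 1 / 2 * y⁻¹ - 2 / γ * (y⁻¹ * h (γ * y ^ 2 / 4)) := by
    filter_upwards [Ioi_mem_nhds hx] with y hy
    rw [hq y hy]
    field_simp
  refine (hψ.congr_of_eventuallyEq hq_eq).congr_deriv ?_
  simp only [Function.comp_apply]
  field_simp
  ring

theorem sq_sub_deriv_feller_drift (hγ : γ ≠ 0) (hx : 0 < x)
    (hh : HasDerivAt h (h' (γ * x ^ 2 / 4)) (γ * x ^ 2 / 4))
    (hq : ∀ y ∈ Ioi (0:ℝ), q y = 1 / (2 * y) - (2 / (γ * y)) * h (γ * y ^ 2 / 4)) :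
    q x ^ 2 - deriv q x = 3 / (4 * x ^ 2) + fellerRemainder γ h h' (γ * x ^ 2 / 4) := by
  rw [(hasDerivAt_feller_drift hγ hx hh hq).deriv, hq x hx, fellerRemainder]
  field_simp
  ring

end Drift

section Remainder

variable {γ : ℝ} {h h' : ℝ → ℝ}

theorem tendsto_mul_fellerRemainder_nhdsGT_zero (hh : ContinuousWithinAt h (Ici 0) 0)
    (hh' : ContinuousWithinAt h' (Ici 0) 0) (h0 : h 0 = 0) :
    Tendsto (fun u => u * fellerRemainder γ h h' u) (𝓝[>] 0) (𝓝 0) := by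
  have hle : 𝓝[>] (0:ℝ) ≤ 𝓝[≥] 0 := nhdsWithin_mono _ Ioi_subset_Ici_self
  have hlim : Tendsto (fun u => u * h' u - h u + h u ^ 2 / γ) (𝓝[>] 0)
      (𝓝 (0 * h' 0 - h 0 + h 0 ^ 2 / γ)) :=
    ((tendsto_nhdsWithin_of_tendsto_nhds tendsto_id).mul (hh'.tendsto.mono_left hle)
      |>.sub (hh.tendsto.mono_left hle)).add ((hh.tendsto.mono_left hle).pow 2 |>.div_const γ)
  rw [h0] at hlim
  norm_num at hlim
  refine hlim.congr' ?_
  filter_upwards [self_mem_nhdsWithin] with u (hu : 0 < u)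
  rw [fellerRemainder]
  field_simp

theorem continuousOn_fellerRemainder (hh : ContinuousOn h (Ioi 0))
    (hh' : ContinuousOn h' (Ioi 0)) : ContinuousOn (fellerRemainder γ h h') (Ioi 0) := by
  have hne : ∀ u ∈ Ioi (0:ℝ), u ≠ 0 := fun u hu => ne_of_gt hu
  refine ((hh'.sub (hh.div continuousOn_id hne)).add
    (((hh.pow 2).div continuousOn_id hne).div_const γ)).congr fun u _ => ?_
  simp only [fellerRemainder, Pi.add_apply, Pi.sub_apply, Pi.div_apply, Pi.pow_apply, id,
    div_div, mul_comm γ]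

theorem fellerRemainder_ge (hγ : 0 < γ) {u : ℝ} (hu : 0 < u) (hhu : h u ≤ -√u)
    (hh'u : -(1 / (2 * γ)) < u * h' u / h u ^ 2) :
    h u ^ 2 / (2 * γ * u) ≤ fellerRemainder γ h h' u := by
  have hsq : u ≤ h u ^ 2 := by
    have := Real.sq_sqrt hu.le
    nlinarith [Real.sqrt_nonneg u]
  have hpos : 0 < h u ^ 2 := hu.trans_le hsq
  have hh'_lb : -(h u ^ 2 / (2 * γ * u)) ≤ h' u := by
    rw [lt_div_iff₀ hpos] at hh'u
    have : -(h u ^ 2 / (2 * γ * u)) = -(1 / (2 * γ)) * h u ^ 2 / u := by field_simp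
    rw [this, div_le_iff₀ hu]
    linarith
  have hmid : 0 ≤ -(h u / u) := by
    rw [neg_nonneg]
    exact div_nonpos_of_nonpos_of_nonneg (hhu.trans (by simp [Real.sqrt_nonneg])) hu.le
  have : h u ^ 2 / (γ * u) = 2 * (h u ^ 2 / (2 * γ * u)) := by field_simp
  rw [fellerRemainder]
  linarith

theorem tendsto_fellerRemainder_atTop (hγ : 0 < γ)
    (hh1 : Tendsto (fun u => h u / √u) atTop atBot)
    (hh2 : Tendsto (fun u => u * h' u / h u ^ 2) atTop (𝓝 0)) :
    Tendsto (fellerRemainder γ h h') atTop atTop := by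
  have hsq : Tendsto (fun u => (h u / √u) ^ 2) atTop atTop :=
    ((tendsto_pow_atTop two_ne_zero).comp (tendsto_neg_atBot_atTop.comp hh1)).congr
      fun u => by simp
  refine tendsto_atTop_mono' atTop ?_ (hsq.atTop_div_const (by positivity : 0 < 2 * γ))
  filter_upwards [hh1.eventually (eventually_le_atBot (-1)),
    hh2.eventually (eventually_gt_nhds (show -(1 / (2 * γ)) < 0 by simp [hγ])),
    eventually_gt_atTop 0] with u h1 h2 hu
  have hsqrt : 0 < √u := Real.sqrt_pos.mpr hu
  calc (h u / √u) ^ 2 / (2 * γ) = h u ^ 2 / (2 * γ * u) := by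
        rw [div_pow, Real.sq_sqrt hu.le]
        field_simp
    _ ≤ fellerRemainder γ h h' u :=
        fellerRemainder_ge hγ hu (by rw [div_le_iff₀ hsqrt] at h1; linarith) h2

end Remainder

section BesselPlusRemainder

variable {γ : ℝ} {R F : ℝ → ℝ}

theorem tendsto_sq_mul_nhdsGT_zero_of_eq_bessel_add (hγ : 0 < γ)
    (hF : ∀ x ∈ Ioi (0:ℝ), F x = 3 / (4 * x ^ 2) + R (γ * x ^ 2 / 4))
    (hR : Tendsto (fun u => u * R u) (𝓝[>] 0) (𝓝 0)) :
    Tendsto (fun x => x ^ 2 * F x) (𝓝[>] 0) (𝓝 (3 / 4)) := by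
  have hu : Tendsto (fun x : ℝ => γ * x ^ 2 / 4) (𝓝[>] 0) (𝓝[>] 0) :=
    tendsto_nhdsWithin_iff.mpr ⟨(((continuous_const.mul (continuous_pow 2)).div_const 4).tendsto'
      0 0 (by simp)).mono_left nhdsWithin_le_nhds,
      eventually_nhdsWithin_of_forall fun x (hx : 0 < x) => by simp only [mem_Ioi]; positivity⟩
  have hlim := ((hR.comp hu).const_mul (4 / γ)).const_add (3 / 4)
  rw [mul_zero, add_zero] at hlim
  refine hlim.congr' ?_
  filter_upwards [self_mem_nhdsWithin] with x (hx : 0 < x)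
  rw [hF x hx, Function.comp_apply]
  field_simp

theorem tendsto_atTop_of_eq_bessel_add (hγ : 0 < γ)
    (hF : ∀ x ∈ Ioi (0:ℝ), F x = 3 / (4 * x ^ 2) + R (γ * x ^ 2 / 4))
    (hR : Tendsto R atTop atTop) : Tendsto F atTop atTop := by
  refine tendsto_atTop_mono' atTop ?_
    (hR.comp (((tendsto_pow_atTop two_ne_zero).const_mul_atTop hγ).atTop_div_const four_pos))
  filter_upwards [eventually_gt_atTop 0] with x hx
  rw [hF x hx, Function.comp_apply]
  exact le_add_of_nonneg_left (by positivity)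

theorem continuousOn_of_eq_bessel_add (hγ : 0 < γ)
    (hF : ∀ x ∈ Ioi (0:ℝ), F x = 3 / (4 * x ^ 2) + R (γ * x ^ 2 / 4))
    (hR : ContinuousOn R (Ioi 0)) : ContinuousOn F (Ioi 0) :=
  ((continuousOn_const.div (by fun_prop) fun x (hx : 0 < x) => by positivity).add
    (hR.comp (by fun_prop) fun x (hx : 0 < x) => by simp only [mem_Ioi]; positivity)).congr hF

end BesselPlusRemainder

theorem bddBelow_image_Ioi_zero_of_eventually_ge {f : ℝ → ℝ} {m : ℝ}
    (hf : ContinuousOn f (Ioi 0)) (h0 : ∀ᶠ x in 𝓝[>] 0, m ≤ f x)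
    (hinf : ∀ᶠ x in atTop, m ≤ f x) : BddBelow (f '' Ioi 0) := by
  obtain ⟨a, ha, haP⟩ := mem_nhdsGT_iff_exists_Ioo_subset.mp h0
  obtain ⟨b, hb⟩ := hinf.exists_forall_of_atTop
  have hfab : ContinuousOn f (Icc a b) :=
    hf.mono fun y hy => (show (0:ℝ) < a from ha).trans_le hy.1
  obtain ⟨m', hm'⟩ := (isCompact_Icc.image_of_continuousOn hfab).bddBelow
  refine ⟨min m m', ?_⟩
  rintro _ ⟨x, hx, rfl⟩
  rcases lt_or_ge x a with hxa | hxa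
  · exact (min_le_left _ _).trans (haP ⟨hx, hxa⟩)
  rcases le_or_gt x b with hxb | hxb
  · exact (min_le_right _ _).trans (hm' ⟨x, ⟨hxa, hxb⟩, rfl⟩)
  · exact (min_le_left _ _).trans (hb x hxb.le)

/-- Let `γ > 0` and let `h : [0,∞) → ℝ` be `C¹` with `h(0) = 0`,
`h(x)/√x → −∞` and `x h'(x)/h(x)² → 0` as `x → ∞`. For the drift
`q(x) = 1/(2x) − (2/(γx)) h(γx²/4)` one has `x²(q²(x) − q'(x)) → 3/4` as `x → 0⁺`,
`inf_{x>0}(q² − q') > −∞`, and `q²(x) − q'(x) → +∞` as `x → ∞` (hypothesis (H2)). -/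
theorem H2_for_generalized_Feller_drift (γ : ℝ) (hγ : 0 < γ) (h h' : ℝ → ℝ)
    (hderiv : ∀ x ∈ Set.Ici (0:ℝ), HasDerivWithinAt h (h' x) (Set.Ici 0) x)
    (hcont : ContinuousOn h' (Set.Ici 0))
    (h0 : h 0 = 0)
    (hh1 : Tendsto (fun x => h x / Real.sqrt x) atTop atBot)
    (hh2 : Tendsto (fun x => x * h' x / (h x) ^ 2) atTop (𝓝 0))
    (q : ℝ → ℝ)
    (hq : ∀ x ∈ Set.Ioi (0:ℝ), q x = 1 / (2 * x) - (2 / (γ * x)) * h (γ * x ^ 2 / 4)) :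
    Tendsto (fun x => x ^ 2 * ((q x) ^ 2 - deriv q x)) (𝓝[>] (0:ℝ)) (𝓝 (3 / 4)) ∧
    BddBelow ((fun x => (q x) ^ 2 - deriv q x) '' Set.Ioi 0) ∧
    Tendsto (fun x => (q x) ^ 2 - deriv q x) atTop atTop := by
  have hhc : ContinuousOn h (Ici 0) := fun x hx => (hderiv x hx).continuousWithinAt
  have hF : ∀ x ∈ Ioi (0:ℝ),
      q x ^ 2 - deriv q x = 3 / (4 * x ^ 2) + fellerRemainder γ h h' (γ * x ^ 2 / 4) := by
    intro x (hx : 0 < x)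
    have hu : 0 < γ * x ^ 2 / 4 := by positivity
    exact sq_sub_deriv_feller_drift hγ.ne' hx
      ((hderiv _ hu.le).hasDerivAt (Ici_mem_nhds hu)) hq
  have hnear := tendsto_sq_mul_nhdsGT_zero_of_eq_bessel_add hγ hF
    (tendsto_mul_fellerRemainder_nhdsGT_zero (hhc 0 self_mem_Ici) (hcont 0 self_mem_Ici) h0)
  have hinf := tendsto_atTop_of_eq_bessel_add hγ hF (tendsto_fellerRemainder_atTop hγ hh1 hh2)
  have hcontF := continuousOn_of_eq_bessel_add hγ hF
    (continuousOn_fellerRemainder (hhc.mono Ioi_subset_Ici_self) (hcont.mono Ioi_subset_Ici_self))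
  refine ⟨hnear, bddBelow_image_Ioi_zero_of_eventually_ge hcontF ?_ (hinf.eventually_ge_atTop 0),
    hinf⟩
  filter_upwards [hnear.eventually (eventually_gt_nhds (by norm_num : (0:ℝ) < 3 / 4))] with x hx
  exact (pos_of_mul_pos_right hx (sq_nonneg x)).le
end

section
/- Let γ > 0 and let h : [0,∞) → ℝ be C¹ with h(0) = 0, lim_{x→∞} h(x)/√x = −∞ and lim_{x→∞} x·h'(x)/h(x)² = 0. Define q(x) := 1/(2x) − (2/(γx))·h(γx²/4) for x > 0 and Q(x) := 2∫₁ˣ q(u) du. Then: (i) Q(x)/x → +∞ as x → ∞; (ii) the limit A := lim_{x→0⁺}(Q(x) − log x) exists and is finite; (iii) ∫₁^∞ e^{Q(y)} dy = ∞; and (iv) ∫₀¹ e^{Q(y)} (∫_y¹ e^{−Q(z)} dz) dy < ∞ (i.e. Λ(∞) = ∞ and κ(0⁺) < ∞, so absorption at 0 is certain). -/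
open Filter Set Topology MeasureTheory
open scoped ENNReal

/-!
Write `2 q(u) = 1/u + φ(u)` with `φ = fellerDriftCorrection γ h`, so that
`Q(x) = log x + ∫₁ˣ φ`.

Near `0`: `h` is `C¹` with `h(0) = 0`, so `h(y) = O(y)` and `φ` is bounded on `(0, 1]`. Hence
`Q - log` converges at `0⁺` and is bounded by some `M` on `(0, 1]`, so `e^{Q(y)} ≤ e^M y` and
`∫_y^1 e^{-Q} ≤ e^M log(1/y)`; the integrand of (iv) is then `O(y log(1/y))`, which is bounded.

Near `∞`: with `y = γu²/4` one has `φ(u) = -(2/√γ) h(y)/√y → +∞`, so `(∫₁ˣ φ)/x → +∞`,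
which gives (i); in particular `Q ≥ 0` eventually, whence `∫₁^∞ e^Q = ∞`.
-/

lemma continuousAt_primitive_of_continuousOn {f : ℝ → ℝ} {s : Set ℝ} {a x : ℝ}
    (hf : ContinuousOn f s) (hs : MeasurableSet s) (hsx : s ∈ 𝓝 x) (has : uIcc a x ⊆ s) :
    ContinuousAt (fun y => ∫ t in a..y, f t) x :=
  (intervalIntegral.integral_hasDerivAt_right ((hf.mono has).intervalIntegrable)
    (by simpa [nhdsWithin_eq_nhds.2 hsx] using hf.stronglyMeasurableAtFilter_nhdsWithin hs x)
    (hf.continuousAt hsx)).continuousAt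

lemma tendsto_primitive_nhdsGT {f : ℝ → ℝ} {a b : ℝ} (hab : a < b)
    (hf : IntegrableOn f (Ioc a b)) :
    Tendsto (fun x => ∫ t in b..x, f t) (𝓝[>] a) (𝓝 (∫ t in b..a, f t)) := by
  have hcont := intervalIntegral.continuousOn_primitive_interval'
    ((intervalIntegrable_iff_integrableOn_Ioc_of_le hab.le).2 hf) right_mem_uIcc
  rw [uIcc_of_le hab.le] at hcont
  rw [← nhdsWithin_Ioc_eq_nhdsGT hab]
  exact ((hcont a (left_mem_Icc.2 hab.le)).mono Ioc_subset_Icc_self).tendsto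

lemma tendsto_integral_div_atTop_of_tendsto_atTop {f : ℝ → ℝ} {a : ℝ}
    (hf : LocallyIntegrableOn f (Ici a)) (hf_top : Tendsto f atTop atTop) :
    Tendsto (fun x => (∫ t in a..x, f t) / x) atTop atTop := by
  have hint : ∀ b c, a ≤ b → a ≤ c → IntervalIntegrable f volume b c := fun b c hb hc =>
    (hf.integrableOn_compact_subset (fun t ht => le_trans (le_min hb hc) ht.1)
      isCompact_uIcc).intervalIntegrable
  refine tendsto_atTop.2 fun B => ?_
  obtain ⟨u, hu⟩ := (hf_top.eventually_ge_atTop (B + 1)).exists_forall_of_atTop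
  set u₀ := max u a
  have hlin : ∀ x, u₀ ≤ x →
      (B + 1) * x + ((∫ t in a..u₀, f t) - (B + 1) * u₀) ≤ ∫ t in a..x, f t := by
    intro x hx
    have hmono : (B + 1) * (x - u₀) ≤ ∫ t in u₀..x, f t := by
      have := intervalIntegral.integral_mono_on hx intervalIntegrable_const
        (hint u₀ x (le_max_right _ _) ((le_max_right _ _).trans hx))
        (fun t ht => hu t ((le_max_left _ _).trans ht.1))
      rwa [intervalIntegral.integral_const, smul_eq_mul, mul_comm] at this
    rw [← intervalIntegral.integral_add_adjacent_intervals
      (hint a u₀ le_rfl (le_max_right _ _)) (hint u₀ x (le_max_right _ _)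
      ((le_max_right _ _).trans hx))]
    linarith
  have hlim : Tendsto (fun x => (B + 1) + ((∫ t in a..u₀, f t) - (B + 1) * u₀) / x) atTop
      (𝓝 (B + 1)) := by
    simpa using (tendsto_const_nhds (x := B + 1)).add
      ((tendsto_const_nhds (x := (∫ t in a..u₀, f t) - (B + 1) * u₀)).div_atTop tendsto_id)
  filter_upwards [hlim.eventually_const_le (lt_add_one B), eventually_ge_atTop u₀,
    eventually_gt_atTop 0] with x hB hx hx0
  calc B ≤ (B + 1) + ((∫ t in a..u₀, f t) - (B + 1) * u₀) / x := hB
    _ = ((B + 1) * x + ((∫ t in a..u₀, f t) - (B + 1) * u₀)) / x := by field_simp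
    _ ≤ (∫ t in a..x, f t) / x := by gcongr; exact hlin x hx

lemma lintegral_Ioi_ofReal_eq_top {f : ℝ → ℝ} {a : ℝ} (hf : ∀ᶠ x in atTop, 1 ≤ f x) :
    ∫⁻ x in Ioi a, ENNReal.ofReal (f x) = ⊤ := by
  obtain ⟨b, hb⟩ := hf.exists_forall_of_atTop
  rw [eq_top_iff]
  calc ⊤ = ∫⁻ _ in Ioi (max a b), (1 : ℝ≥0∞) := by
        rw [setLIntegral_one, Real.volume_Ioi]
    _ ≤ ∫⁻ x in Ioi (max a b), ENNReal.ofReal (f x) :=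
      setLIntegral_mono' measurableSet_Ioi fun x hx =>
        ENNReal.one_le_ofReal.2 (hb x ((le_max_right a b).trans hx.le))
    _ ≤ ∫⁻ x in Ioi a, ENNReal.ofReal (f x) :=
      lintegral_mono_set (Ioi_subset_Ioi (le_max_left a b))

lemma exists_abs_le_mul_of_hasDerivWithinAt {f f' : ℝ → ℝ} {a : ℝ}
    (hf : ∀ x ∈ Icc 0 a, HasDerivWithinAt f (f' x) (Icc 0 a) x)
    (hf' : ContinuousOn f' (Icc 0 a)) (h0 : f 0 = 0) :
    ∃ M, 0 ≤ M ∧ ∀ y ∈ Icc 0 a, |f y| ≤ M * y := by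
  obtain ⟨C, hC⟩ := isCompact_Icc.exists_bound_of_continuousOn hf'
  refine ⟨max C 0, le_max_right C 0, fun y hy => ?_⟩
  simpa [h0, abs_of_nonneg hy.1] using Convex.norm_image_sub_le_of_norm_hasDerivWithin_le hf
    (fun x hx => (hC x hx).trans (le_max_left C 0)) (convex_Icc 0 a)
    (left_mem_Icc.2 (hy.1.trans hy.2)) hy

section LogAddPrimitive

variable {Q φ : ℝ → ℝ}

lemma continuousOn_of_eq_log_add_integral
    (hQ : ∀ x ∈ Ioi (0 : ℝ), Q x = Real.log x + ∫ u in 1..x, φ u)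
    (hφ : ContinuousOn φ (Ioi 0)) :
    ContinuousOn Q (Ioi 0) := fun x hx =>
  ((Real.continuousAt_log (ne_of_gt hx)).add (continuousAt_primitive_of_continuousOn hφ
    measurableSet_Ioi (Ioi_mem_nhds hx) fun _ ht => (lt_min one_pos hx).trans_le ht.1))
    |>.continuousWithinAt.congr hQ (hQ x hx)

lemma tendsto_div_atTop_of_eq_log_add_integral
    (hQ : ∀ x ∈ Ioi (0 : ℝ), Q x = Real.log x + ∫ u in 1..x, φ u)
    (hφ : ContinuousOn φ (Ioi 0))
    (hφ_top : Tendsto φ atTop atTop) : Tendsto (fun x => Q x / x) atTop atTop := by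
  refine tendsto_atTop_mono' _ ?_ (tendsto_integral_div_atTop_of_tendsto_atTop
    ((hφ.mono fun t (ht : 1 ≤ t) => one_pos.trans_le ht).locallyIntegrableOn measurableSet_Ici)
    hφ_top)
  filter_upwards [eventually_ge_atTop 1] with x hx
  rw [hQ x (one_pos.trans_le hx)]
  gcongr
  exact le_add_of_nonneg_left (Real.log_nonneg hx)

lemma abs_sub_log_le_of_eq_log_add_integral
    (hQ : ∀ x ∈ Ioi (0 : ℝ), Q x = Real.log x + ∫ u in 1..x, φ u) {B : ℝ}
    (hB : ∀ u ∈ Ioc (0 : ℝ) 1, |φ u| ≤ B) {x : ℝ} (hx : x ∈ Ioc (0 : ℝ) 1) :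
    |Q x - Real.log x| ≤ B := by
  rw [hQ x hx.1, add_sub_cancel_left]
  calc |∫ u in 1..x, φ u| ≤ B * |x - 1| :=
        intervalIntegral.norm_integral_le_of_norm_le_const (f := φ) (C := B) fun u hu => by
          rw [uIoc_of_ge hx.2] at hu
          exact hB u ⟨hx.1.trans hu.1, hu.2⟩
    _ ≤ B := by
        have hB0 : 0 ≤ B := (abs_nonneg _).trans (hB 1 ⟨one_pos, le_rfl⟩)
        rw [abs_of_nonpos (by linarith [hx.2])]
        nlinarith [hx.1]

lemma tendsto_sub_log_nhdsGT_zero_of_eq_log_add_integral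
    (hQ : ∀ x ∈ Ioi (0 : ℝ), Q x = Real.log x + ∫ u in 1..x, φ u)
    (hφ : ContinuousOn φ (Ioi 0))
    {B : ℝ} (hB : ∀ u ∈ Ioc (0 : ℝ) 1, |φ u| ≤ B) :
    Tendsto (fun x => Q x - Real.log x) (𝓝[>] 0) (𝓝 (∫ u in 1..0, φ u)) := by
  have hint : IntegrableOn φ (Ioc 0 1) := IntegrableOn.of_bound measure_Ioc_lt_top
    ((hφ.mono Ioc_subset_Ioi_self).aestronglyMeasurable measurableSet_Ioc) B
    (ae_restrict_of_forall_mem measurableSet_Ioc hB)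
  refine (tendsto_primitive_nhdsGT one_pos hint).congr' ?_
  filter_upwards [self_mem_nhdsWithin] with x hx
  rw [hQ x hx, add_sub_cancel_left]

end LogAddPrimitive

lemma norm_exp_mul_integral_exp_neg_le {Q : ℝ → ℝ} {M : ℝ} (hQ : ContinuousOn Q (Ioc 0 1))
    (hM : ∀ x ∈ Ioc 0 1, |Q x - Real.log x| ≤ M) {y : ℝ} (hy : y ∈ Ioo (0 : ℝ) 1) :
    ‖Real.exp (Q y) * ∫ z in y..1, Real.exp (-Q z)‖ ≤ Real.exp (2 * M) := by
  have hpos : ∀ z ∈ Icc y 1, 0 < z := fun z hz => hy.1.trans_le hz.1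
  have hexpQ : Real.exp (Q y) ≤ Real.exp M * y :=
    calc Real.exp (Q y) ≤ Real.exp (M + Real.log y) :=
          Real.exp_le_exp.2 (by linarith [(abs_le.1 (hM y ⟨hy.1, hy.2.le⟩)).2])
      _ = Real.exp M * y := by rw [Real.exp_add, Real.exp_log hy.1]
  have hexp_neg : ∫ z in y..1, Real.exp (-Q z) ≤ Real.exp M * -Real.log y :=
    calc ∫ z in y..1, Real.exp (-Q z) ≤ ∫ z in y..1, Real.exp M * z⁻¹ := by
          refine intervalIntegral.integral_mono_on hy.2.le
            ((hQ.mono (Icc_subset_Ioc hy.1 le_rfl)).neg.rexp.intervalIntegrable_of_Icc hy.2.le)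
            ((continuousOn_const.mul (continuousOn_inv₀.mono fun z hz => (hpos z hz).ne'))
              |>.intervalIntegrable_of_Icc hy.2.le) fun z hz => ?_
          calc Real.exp (-Q z) ≤ Real.exp (M + -Real.log z) :=
                Real.exp_le_exp.2 (by linarith [(abs_le.1 (hM z ⟨hpos z hz, hz.2⟩)).1])
            _ = Real.exp M * z⁻¹ := by rw [Real.exp_add, Real.exp_neg, Real.exp_log (hpos z hz)]
      _ = Real.exp M * -Real.log y := by
          rw [intervalIntegral.integral_const_mul, integral_inv_of_pos hy.1 one_pos, one_div,
            Real.log_inv]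
  have hint_nonneg : 0 ≤ ∫ z in y..1, Real.exp (-Q z) :=
    intervalIntegral.integral_nonneg hy.2.le fun z _ => (Real.exp_pos _).le
  have hylog : y * -Real.log y ≤ 1 := by
    linarith [Real.abs_log_mul_self_lt y hy.1 hy.2.le, neg_abs_le (Real.log y * y)]
  rw [Real.norm_eq_abs, abs_of_nonneg (mul_nonneg (Real.exp_pos _).le hint_nonneg)]
  calc Real.exp (Q y) * ∫ z in y..1, Real.exp (-Q z)
      ≤ (Real.exp M * y) * (Real.exp M * -Real.log y) :=
        mul_le_mul hexpQ hexp_neg hint_nonneg (mul_pos (Real.exp_pos M) hy.1).le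
    _ = Real.exp (2 * M) * (y * -Real.log y) := by rw [two_mul, Real.exp_add]; ring
    _ ≤ Real.exp (2 * M) := mul_le_of_le_one_right (Real.exp_pos _).le hylog

lemma integrableOn_exp_mul_integral_exp_neg {Q : ℝ → ℝ} {M : ℝ}
    (hQ : ContinuousOn Q (Ioc 0 1))
    (hM : ∀ x ∈ Ioc 0 1, |Q x - Real.log x| ≤ M) :
    IntegrableOn (fun y => Real.exp (Q y) * ∫ z in y..1, Real.exp (-Q z)) (Ioo 0 1) := by
  have hcont : ContinuousOn (fun y => Real.exp (Q y) * ∫ z in y..1, Real.exp (-Q z))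
      (Ioo 0 1) := by
    refine (hQ.mono Ioo_subset_Ioc_self).rexp.mul fun y hy => ContinuousAt.continuousWithinAt ?_
    have hsub : uIcc 1 y ⊆ Ioc 0 1 := by
      rw [uIcc_of_ge hy.2.le]; exact Icc_subset_Ioc hy.1 le_rfl
    convert (continuousAt_primitive_of_continuousOn hQ.neg.rexp measurableSet_Ioc
      (Ioc_mem_nhds hy.1 hy.2) hsub).neg using 1
    funext w
    exact intervalIntegral.integral_symm 1 w
  exact IntegrableOn.of_bound measure_Ioo_lt_top (hcont.aestronglyMeasurable measurableSet_Ioo) _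
    (ae_restrict_of_forall_mem measurableSet_Ioo fun _ hy =>
      norm_exp_mul_integral_exp_neg_le hQ hM hy)

noncomputable def fellerDriftCorrection (γ : ℝ) (h : ℝ → ℝ) (u : ℝ) : ℝ :=
  -(4 / (γ * u)) * h (γ * u ^ 2 / 4)

section FellerDriftCorrection

variable {γ : ℝ} {h : ℝ → ℝ}

lemma continuousOn_fellerDriftCorrection (hγ : 0 < γ) (hh : ContinuousOn h (Ici 0)) :
    ContinuousOn (fellerDriftCorrection γ h) (Ioi 0) := by
  refine (continuousOn_const.div (continuousOn_const.mul continuousOn_id) fun u hu =>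
    (mul_pos hγ hu).ne').neg.mul (hh.comp (by fun_prop) fun u _ => ?_)
  show (0 : ℝ) ≤ γ * u ^ 2 / 4
  positivity

lemma abs_fellerDriftCorrection_le (hγ : 0 < γ) {M : ℝ}
    (hM : ∀ y ∈ Icc 0 (γ / 4), |h y| ≤ M * y) {u : ℝ} (hu : u ∈ Ioc 0 1) :
    |fellerDriftCorrection γ h u| ≤ M * u := by
  have hγu : 0 < γ * u := mul_pos hγ hu.1
  have hy : γ * u ^ 2 / 4 ∈ Icc 0 (γ / 4) :=
    ⟨by positivity, by nlinarith [mul_le_one₀ hu.2 hu.1.le hu.2]⟩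
  calc |fellerDriftCorrection γ h u| = 4 / (γ * u) * |h (γ * u ^ 2 / 4)| := by
        rw [fellerDriftCorrection, abs_mul, abs_neg, abs_of_pos (by positivity)]
    _ ≤ 4 / (γ * u) * (M * (γ * u ^ 2 / 4)) := by gcongr; exact hM _ hy
    _ = M * u := by field_simp

lemma tendsto_fellerDriftCorrection_atTop (hγ : 0 < γ)
    (hh : Tendsto (fun x => h x / Real.sqrt x) atTop atBot) :
    Tendsto (fellerDriftCorrection γ h) atTop atTop := by
  have hsγ : 0 < Real.sqrt γ := Real.sqrt_pos.2 hγ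
  have harg : Tendsto (fun u : ℝ => γ * u ^ 2 / 4) atTop atTop :=
    ((tendsto_pow_atTop two_ne_zero).const_mul_atTop hγ).atTop_div_const four_pos
  refine ((hh.comp harg).const_mul_atBot_of_neg (neg_neg_of_pos (div_pos two_pos hsγ))).congr'
    (eventually_gt_atTop 0 |>.mono fun u hu => ?_)
  have hsqrt : Real.sqrt (γ * u ^ 2 / 4) = Real.sqrt γ * u / 2 := by
    rw [show γ * u ^ 2 / 4 = (Real.sqrt γ * u / 2) ^ 2 by
      rw [div_pow, mul_pow, Real.sq_sqrt hγ.le]; ring]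
    exact Real.sqrt_sq (by positivity)
  simp only [Function.comp_apply, fellerDriftCorrection, hsqrt]
  generalize h (γ * u ^ 2 / 4) = v
  field_simp
  rw [Real.sq_sqrt hγ.le]
  ring

lemma two_mul_integral_eq_log_add_integral (hγ : 0 < γ) (hh : ContinuousOn h (Ici 0))
    {q : ℝ → ℝ}
    (hq : ∀ x ∈ Ioi (0 : ℝ), q x = 1 / (2 * x) - (2 / (γ * x)) * h (γ * x ^ 2 / 4))
    {x : ℝ} (hx : 0 < x) :
    2 * ∫ u in 1..x, q u = Real.log x + ∫ u in 1..x, fellerDriftCorrection γ h u := by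
  have hsub : uIcc 1 x ⊆ Ioi 0 := fun t ht => (lt_min one_pos hx).trans_le ht.1
  have hinv : IntervalIntegrable (fun u : ℝ => u⁻¹) volume 1 x :=
    (continuousOn_inv₀.mono fun t ht => (hsub ht).ne').intervalIntegrable
  have hlog : ∫ u in 1..x, u⁻¹ = Real.log x := by rw [integral_inv_of_pos one_pos hx, div_one]
  rw [← intervalIntegral.integral_const_mul, ← hlog,
    ← intervalIntegral.integral_add hinv
      ((continuousOn_fellerDriftCorrection hγ hh).mono hsub).intervalIntegrable]
  refine intervalIntegral.integral_congr fun u hu => ?_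
  have hu0 : u ≠ 0 := (hsub hu).ne'
  simp only [hq u (hsub hu), fellerDriftCorrection]
  field_simp
  ring

end FellerDriftCorrection

theorem H1_for_generalized_Feller_drift_general (γ : ℝ) (hγ : 0 < γ) (h h' : ℝ → ℝ)
    (hderiv : ∀ x ∈ Set.Ici (0:ℝ), HasDerivWithinAt h (h' x) (Set.Ici 0) x)
    (hcont : ContinuousOn h' (Set.Ici 0))
    (h0 : h 0 = 0)
    (hh1 : Tendsto (fun x => h x / Real.sqrt x) atTop atBot)
    (q Q : ℝ → ℝ)
    (hq : ∀ x ∈ Set.Ioi (0:ℝ), q x = 1 / (2 * x) - (2 / (γ * x)) * h (γ * x ^ 2 / 4))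
    (hQ : ∀ x ∈ Set.Ioi (0:ℝ), Q x = 2 * ∫ u in (1:ℝ)..x, q u) :
    Tendsto (fun x => Q x / x) atTop atTop ∧
    (∃ A : ℝ, Tendsto (fun x => Q x - Real.log x) (𝓝[>] (0:ℝ)) (𝓝 A)) ∧
    (∫⁻ y in Set.Ioi (1:ℝ), ENNReal.ofReal (Real.exp (Q y))) = ⊤ ∧
    MeasureTheory.IntegrableOn
      (fun y => Real.exp (Q y) * ∫ z in y..(1:ℝ), Real.exp (-(Q z))) (Set.Ioo 0 1) := by
  have hh : ContinuousOn h (Ici 0) := fun x hx => (hderiv x hx).continuousWithinAt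
  have hφ := continuousOn_fellerDriftCorrection hγ hh
  have hQφ :
      ∀ x ∈ Ioi (0 : ℝ), Q x = Real.log x + ∫ u in 1..x, fellerDriftCorrection γ h u :=
    fun x hx => (hQ x hx).trans (two_mul_integral_eq_log_add_integral hγ hh hq hx)
  obtain ⟨M, hM0, hM⟩ := exists_abs_le_mul_of_hasDerivWithinAt (a := γ / 4)
    (fun x hx => (hderiv x hx.1).mono Icc_subset_Ici_self) (hcont.mono Icc_subset_Ici_self) h0
  have hφM : ∀ u ∈ Ioc (0 : ℝ) 1, |fellerDriftCorrection γ h u| ≤ M := fun u hu =>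
    (abs_fellerDriftCorrection_le hγ hM hu).trans (mul_le_of_le_one_right hM0 hu.2)
  have hQ_div := tendsto_div_atTop_of_eq_log_add_integral hQφ hφ
    (tendsto_fellerDriftCorrection_atTop hγ hh1)
  refine ⟨hQ_div, ⟨_, tendsto_sub_log_nhdsGT_zero_of_eq_log_add_integral hQφ hφ hφM⟩,
    lintegral_Ioi_ofReal_eq_top ?_, integrableOn_exp_mul_integral_exp_neg
      ((continuousOn_of_eq_log_add_integral hQφ hφ).mono Ioc_subset_Ioi_self)
      fun x hx => abs_sub_log_le_of_eq_log_add_integral hQφ hφM hx⟩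
  filter_upwards [hQ_div.eventually_ge_atTop 0, eventually_gt_atTop 0] with x hQx hx
  exact Real.one_le_exp (by simpa using (le_div_iff₀ hx).1 hQx)

/-- Let `γ > 0` and let `h` be `C¹` on `[0,∞)` with `h(0) = 0`,
`h(x)/√x → −∞` and `x h'(x)/h(x)² → 0` as `x → ∞`. For the drift
`q(x) = 1/(2x) − (2/(γx)) h(γx²/4)` and `Q(x) = 2∫₁ˣ q`, one has:
(i) `Q(x)/x → +∞`; (ii) `Q(x) − log x` has a finite limit as `x → 0⁺`;
(iii) `∫₁^∞ e^{Q} = ∞` (so `Λ(∞) = ∞`); and (iv) `∫₀¹ e^{Q(y)} (∫_y¹ e^{−Q(z)} dz) dy < ∞`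
(so `κ(0⁺) < ∞`), hence absorption at `0` is certain. -/
theorem H1_for_generalized_Feller_drift (γ : ℝ) (hγ : 0 < γ) (h h' : ℝ → ℝ)
    (hderiv : ∀ x ∈ Set.Ici (0:ℝ), HasDerivWithinAt h (h' x) (Set.Ici 0) x)
    (hcont : ContinuousOn h' (Set.Ici 0))
    (h0 : h 0 = 0)
    (hh1 : Tendsto (fun x => h x / Real.sqrt x) atTop atBot)
    (hh2 : Tendsto (fun x => x * h' x / (h x) ^ 2) atTop (𝓝 0))
    (q Q : ℝ → ℝ)
    (hq : ∀ x ∈ Set.Ioi (0:ℝ), q x = 1 / (2 * x) - (2 / (γ * x)) * h (γ * x ^ 2 / 4))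
    (hQ : ∀ x ∈ Set.Ioi (0:ℝ), Q x = 2 * ∫ u in (1:ℝ)..x, q u) :
    Tendsto (fun x => Q x / x) atTop atTop ∧
    (∃ A : ℝ, Tendsto (fun x => Q x - Real.log x) (𝓝[>] (0:ℝ)) (𝓝 A)) ∧
    (∫⁻ y in Set.Ioi (1:ℝ), ENNReal.ofReal (Real.exp (Q y))) = ⊤ ∧
    MeasureTheory.IntegrableOn
      (fun y => Real.exp (Q y) * ∫ z in y..(1:ℝ), Real.exp (-(Q z))) (Set.Ioo 0 1) :=
  H1_for_generalized_Feller_drift_general γ hγ h h' hderiv hcont h0 hh1 q Q hq hQ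
end

section
/- Let γ > 0 and let h : [0,∞) → ℝ be C¹ with h(0) = 0, lim_{x→∞} h(x)/√x = −∞ and lim_{x→∞} x·h'(x)/h(x)² = 0. Define q(x) := 1/(2x) − (2/(γx))·h(γx²/4) for x > 0 and Q(x) := 2∫₁ˣ q(u) du. Then ∫₁^∞ e^{−Q(x)} dx < ∞ and ∫₀¹ x·e^{−Q(x)/2} dx < ∞, i.e. hypothesis (H4) holds. -/
open Filter Set Topology MeasureTheory

/-!
With `J x = ∫₁ˣ h(γu²/4)/u du` (`driftIntegral γ h`) one has `Q = log − (4/γ) J` on `(0, ∞)`.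

At infinity, `h(γu²/4)/u = (√γ/2) · h(t)/√t` with `t = γu²/4`, so the integrand of `J` tends
to `−∞`; hence `J x ≤ B − x` for `x ≥ 1`, and `e^{−Q(x)} ≤ e^{(4/γ)(B − x)}` decays exponentially.

Near `0`, `h(0) = 0` and the mean value theorem, with `h'` bounded on `[0, γ/4]`, give
`|h t| ≤ L t`; so the integrand of `J` is bounded by `Lγ/4` on `(0, 1]`, `J` is bounded on `(0, 1)`,
and so is `x e^{−Q(x)/2} = √x e^{(2/γ) J x}`.
-/

theorem exists_abs_le_mul_of_hasDerivWithinAt_of_eq_zero {f f' : ℝ → ℝ} {a : ℝ}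
    (hf : ∀ x ∈ Icc 0 a, HasDerivWithinAt f (f' x) (Icc 0 a) x)
    (hf' : ContinuousOn f' (Icc 0 a)) (hf0 : f 0 = 0) :
    ∃ L, 0 ≤ L ∧ ∀ t ∈ Icc 0 a, |f t| ≤ L * t := by
  obtain ⟨L, hL⟩ := isCompact_Icc.exists_bound_of_continuousOn hf'
  refine ⟨max L 0, le_max_right _ _, fun t ht => ?_⟩
  have hmvt := (convex_Icc 0 a).norm_image_sub_le_of_norm_hasDerivWithin_le hf
    (fun x hx => (hL x hx).trans (le_max_left L 0)) (left_mem_Icc.2 (ht.1.trans ht.2)) ht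
  simpa [hf0, abs_of_nonneg ht.1] using hmvt

theorem integral_le_mul_sub_of_le {g : ℝ → ℝ} {a b M : ℝ} (hab : a ≤ b)
    (hg : ContinuousOn g (Icc a b)) (hgM : ∀ u ∈ Icc a b, g u ≤ M) :
    ∫ u in a..b, g u ≤ M * (b - a) := by
  simpa [mul_comm] using intervalIntegral.integral_mono_on hab
    (hg.intervalIntegrable_of_Icc hab) (intervalIntegrable_const (μ := volume)) hgM

theorem exists_integral_le_sub_mul_of_eventually_le {g : ℝ → ℝ} {a c : ℝ}
    (hg : ContinuousOn g (Ici a)) (hc : 0 ≤ c) (hgc : ∀ᶠ u in atTop, g u ≤ -c) :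
    ∃ B, ∀ x, a ≤ x → ∫ u in a..x, g u ≤ B - c * x := by
  obtain ⟨u₀, hu₀⟩ := eventually_atTop.1 (hgc.and (eventually_ge_atTop a))
  have hau₀ : a ≤ u₀ := (hu₀ u₀ le_rfl).2
  have hgu₀ : ContinuousOn g (Icc a u₀) := hg.mono Icc_subset_Ici_self
  obtain ⟨M, hM⟩ := isCompact_Icc.exists_bound_of_continuousOn hgu₀
  have hgM : ∀ u ∈ Icc a u₀, g u ≤ M := fun u hu => (le_abs_self _).trans (hM u hu)
  have hM0 : 0 ≤ M := (abs_nonneg _).trans (hM a ⟨le_rfl, hau₀⟩)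
  refine ⟨M * (u₀ - a) + c * u₀, fun x hax => ?_⟩
  rcases le_total x u₀ with hxu | hux
  · have := integral_le_mul_sub_of_le hax (hg.mono Icc_subset_Ici_self)
      (fun u hu => hgM u ⟨hu.1, hu.2.trans hxu⟩)
    nlinarith
  · have hg' : ContinuousOn g (Icc u₀ x) := hg.mono fun u hu => hau₀.trans hu.1
    have hhead := integral_le_mul_sub_of_le hau₀ hgu₀ hgM
    have htail := integral_le_mul_sub_of_le hux hg' fun u hu => (hu₀ u hu.1).1
    rw [← intervalIntegral.integral_add_adjacent_intervals (hgu₀.intervalIntegrable_of_Icc hau₀)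
      (hg'.intervalIntegrable_of_Icc hux)]
    linarith

theorem integrableOn_Ioi_exp_of_le_sub_mul {φ : ℝ → ℝ} {a B c : ℝ}
    (hφ : ContinuousOn φ (Ioi a)) (hc : 0 < c) (hφB : ∀ x ∈ Ioi a, φ x ≤ B - c * x) :
    IntegrableOn (fun x => Real.exp (φ x)) (Ioi a) := by
  refine ((exp_neg_integrableOn_Ioi a hc).const_mul (Real.exp B)).mono'
    ((Real.continuous_exp.comp_continuousOn hφ).aestronglyMeasurable measurableSet_Ioi) ?_
  filter_upwards [ae_restrict_mem measurableSet_Ioi] with x hx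
  rw [Real.norm_eq_abs, Real.abs_exp, ← Real.exp_add]
  exact Real.exp_le_exp.2 (by linarith [hφB x hx])

section LogSub

variable {Q J : ℝ → ℝ} {κ : ℝ}

theorem integrableOn_Ioi_one_exp_neg_of_eq_log_sub {B : ℝ} (hκ : 0 < κ)
    (hQ : ∀ x ∈ Ioi 0, Q x = Real.log x - κ * J x) (hQc : ContinuousOn Q (Ioi 0))
    (hJB : ∀ x, 1 ≤ x → J x ≤ B - x) :
    IntegrableOn (fun x => Real.exp (-Q x)) (Ioi 1) := by
  refine integrableOn_Ioi_exp_of_le_sub_mul (B := κ * B)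
    (hQc.mono (Ioi_subset_Ioi zero_le_one)).neg hκ fun x (hx : 1 < x) => ?_
  have hlog : 0 ≤ Real.log x := Real.log_nonneg hx.le
  have hJ : κ * J x ≤ κ * (B - x) := mul_le_mul_of_nonneg_left (hJB x hx.le) hκ.le
  rw [hQ x (zero_lt_one.trans hx)]
  linarith

theorem integrableOn_Ioo_mul_exp_neg_half_of_eq_log_sub {K : ℝ} (hκ : 0 ≤ κ)
    (hQ : ∀ x ∈ Ioi 0, Q x = Real.log x - κ * J x) (hQc : ContinuousOn Q (Ioi 0))
    (hJK : ∀ x ∈ Ioo 0 1, |J x| ≤ K) :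
    IntegrableOn (fun x => x * Real.exp (-Q x / 2)) (Ioo 0 1) := by
  have hcont : ContinuousOn (fun x => x * Real.exp (-Q x / 2)) (Ioo 0 1) :=
    continuousOn_id.mul (Real.continuous_exp.comp_continuousOn
      ((hQc.mono Ioo_subset_Ioi_self).neg.div_const 2))
  refine IntegrableOn.of_bound measure_Ioo_lt_top (hcont.aestronglyMeasurable measurableSet_Ioo)
    (Real.exp (κ * K / 2)) ?_
  filter_upwards [ae_restrict_mem measurableSet_Ioo] with x ⟨hx0, hx1⟩
  have hlog : Real.log x ≤ 0 := Real.log_nonpos hx0.le hx1.le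
  have hJ : κ * J x ≤ κ * K :=
    mul_le_mul_of_nonneg_left ((le_abs_self _).trans (hJK x ⟨hx0, hx1⟩)) hκ
  calc ‖x * Real.exp (-Q x / 2)‖ = Real.exp (Real.log x / 2 + κ * J x / 2) := by
        rw [Real.norm_of_nonneg (by positivity), hQ x hx0]
        nth_rw 1 [← Real.exp_log hx0]
        rw [← Real.exp_add]; ring_nf
    _ ≤ Real.exp (κ * K / 2) := Real.exp_le_exp.2 (by linarith)

end LogSub

noncomputable def driftIntegral (γ : ℝ) (h : ℝ → ℝ) (x : ℝ) : ℝ :=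
  ∫ u in (1:ℝ)..x, h (γ * u ^ 2 / 4) / u

section Drift

variable {γ : ℝ} {h : ℝ → ℝ}

theorem continuousOn_drift_integrand (hγ : 0 ≤ γ) (hh : ContinuousOn h (Ici 0)) :
    ContinuousOn (fun u => h (γ * u ^ 2 / 4) / u) (Ioi 0) :=
  (hh.comp_continuous (by fun_prop) fun u => show 0 ≤ γ * u ^ 2 / 4 by positivity).continuousOn
    |>.div continuousOn_id fun _ hu => (mem_Ioi.1 hu).ne'

theorem intervalIntegrable_drift_integrand (hγ : 0 ≤ γ) (hh : ContinuousOn h (Ici 0)) {x : ℝ}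
    (hx : 0 < x) : IntervalIntegrable (fun u => h (γ * u ^ 2 / 4) / u) volume 1 x :=
  ((continuousOn_drift_integrand hγ hh).mono fun _ hu => (lt_min one_pos hx).trans_le hu.1)
    |>.intervalIntegrable

theorem continuousOn_driftIntegral (hγ : 0 ≤ γ) (hh : ContinuousOn h (Ici 0)) :
    ContinuousOn (driftIntegral γ h) (Ioi 0) := by
  have hg := continuousOn_drift_integrand hγ hh
  exact fun x hx => (intervalIntegral.integral_hasDerivAt_right
    (intervalIntegrable_drift_integrand hγ hh hx) (hg.stronglyMeasurableAtFilter isOpen_Ioi x hx)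
    (hg.continuousAt (isOpen_Ioi.mem_nhds hx))).continuousAt.continuousWithinAt

theorem eq_log_sub_driftIntegral (hγ : 0 ≤ γ) (hh : ContinuousOn h (Ici 0)) {q Q : ℝ → ℝ}
    (hq : ∀ x ∈ Set.Ioi (0:ℝ), q x = 1 / (2 * x) - (2 / (γ * x)) * h (γ * x ^ 2 / 4))
    (hQ : ∀ x ∈ Set.Ioi (0:ℝ), Q x = 2 * ∫ u in (1:ℝ)..x, q u) {x : ℝ} (hx : 0 < x) :
    Q x = Real.log x - 4 / γ * driftIntegral γ h x := by
  have hsub : uIcc 1 x ⊆ Ioi 0 := fun _ hu => (lt_min one_pos hx).trans_le hu.1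
  have hq' : EqOn q (fun u => 2⁻¹ * u⁻¹ - 2 / γ * (h (γ * u ^ 2 / 4) / u)) (uIcc 1 x) :=
    fun u hu => by rw [hq u (hsub hu)]; ring
  have hinv : IntervalIntegrable (fun u : ℝ => u⁻¹) volume 1 x :=
    intervalIntegral.intervalIntegrable_inv (fun u hu => (hsub hu).ne') continuousOn_id
  rw [hQ x hx, intervalIntegral.integral_congr hq', intervalIntegral.integral_sub
    (hinv.const_mul _) ((intervalIntegrable_drift_integrand hγ hh hx).const_mul _),
    intervalIntegral.integral_const_mul, intervalIntegral.integral_const_mul,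
    integral_inv_of_pos one_pos hx, Real.log_div hx.ne' one_ne_zero, Real.log_one, driftIntegral]
  ring

theorem tendsto_drift_integrand_atBot (hγ : 0 < γ)
    (hh : Tendsto (fun x => h x / Real.sqrt x) atTop atBot) :
    Tendsto (fun u => h (γ * u ^ 2 / 4) / u) atTop atBot := by
  have ht : Tendsto (fun u : ℝ => γ * u ^ 2 / 4) atTop atTop :=
    ((tendsto_pow_atTop two_ne_zero).const_mul_atTop hγ).atTop_div_const (by norm_num)
  refine ((hh.comp ht).const_mul_atBot (r := Real.sqrt γ / 2) (by positivity)).congr' ?_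
  filter_upwards [eventually_gt_atTop 0] with u hu
  have : Real.sqrt (γ * u ^ 2 / 4) = Real.sqrt γ / 2 * u := by
    rw [show γ * u ^ 2 / 4 = (Real.sqrt γ / 2 * u) ^ 2 by
      rw [mul_pow, div_pow, Real.sq_sqrt hγ.le]; ring]
    exact Real.sqrt_sq (by positivity)
  simp only [Function.comp_apply, this]
  field_simp

theorem exists_abs_driftIntegral_le (hγ : 0 ≤ γ) {h' : ℝ → ℝ}
    (hderiv : ∀ x ∈ Ici (0:ℝ), HasDerivWithinAt h (h' x) (Ici 0) x)
    (hcont : ContinuousOn h' (Ici 0)) (h0 : h 0 = 0) :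
    ∃ K, ∀ x ∈ Ioo 0 1, |driftIntegral γ h x| ≤ K := by
  obtain ⟨L, hL0, hL⟩ := exists_abs_le_mul_of_hasDerivWithinAt_of_eq_zero (a := γ / 4)
    (fun x hx => (hderiv x hx.1).mono Icc_subset_Ici_self) (hcont.mono Icc_subset_Ici_self) h0
  refine ⟨L * γ / 4, fun x hx => ?_⟩
  have hbound : ∀ u ∈ uIoc 1 x, ‖h (γ * u ^ 2 / 4) / u‖ ≤ L * γ / 4 := by
    intro u hu
    rw [uIoc_of_ge hx.2.le] at hu
    have hu0 : 0 < u := hx.1.trans hu.1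
    have hu2 : u ^ 2 ≤ 1 := pow_le_one₀ hu0.le hu.2
    have hhu := hL (γ * u ^ 2 / 4) ⟨by positivity, by nlinarith⟩
    rw [Real.norm_eq_abs, abs_div, abs_of_pos hu0, div_le_iff₀ hu0]
    have huu : u ^ 2 ≤ u := by nlinarith [hu.2]
    nlinarith [mul_le_mul_of_nonneg_left huu (mul_nonneg hL0 hγ)]
  calc |driftIntegral γ h x| ≤ L * γ / 4 * |x - 1| :=
        intervalIntegral.norm_integral_le_of_norm_le_const hbound
    _ ≤ L * γ / 4 := mul_le_of_le_one_right (by positivity)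
        (by rw [abs_sub_comm, abs_of_pos (sub_pos.2 hx.2)]; linarith [hx.1])

end Drift

theorem H4_for_generalized_Feller_drift_general (γ : ℝ) (hγ : 0 < γ) (h h' : ℝ → ℝ)
    (hderiv : ∀ x ∈ Set.Ici (0:ℝ), HasDerivWithinAt h (h' x) (Set.Ici 0) x)
    (hcont : ContinuousOn h' (Set.Ici 0))
    (h0 : h 0 = 0)
    (hh1 : Tendsto (fun x => h x / Real.sqrt x) atTop atBot)
    (q Q : ℝ → ℝ)
    (hq : ∀ x ∈ Set.Ioi (0:ℝ), q x = 1 / (2 * x) - (2 / (γ * x)) * h (γ * x ^ 2 / 4))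
    (hQ : ∀ x ∈ Set.Ioi (0:ℝ), Q x = 2 * ∫ u in (1:ℝ)..x, q u) :
    MeasureTheory.IntegrableOn (fun x => Real.exp (-(Q x))) (Set.Ioi 1) ∧
    MeasureTheory.IntegrableOn (fun x => x * Real.exp (-(Q x) / 2)) (Set.Ioo 0 1) := by
  have hh : ContinuousOn h (Ici 0) := fun x hx => (hderiv x hx).continuousWithinAt
  have hQJ : ∀ x ∈ Ioi 0, Q x = Real.log x - 4 / γ * driftIntegral γ h x :=
    fun _ hx => eq_log_sub_driftIntegral hγ.le hh hq hQ hx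
  have hQc : ContinuousOn Q (Ioi 0) :=
    ((Real.continuousOn_log.mono fun _ hx => (mem_Ioi.1 hx).ne').sub
      (continuousOn_const.mul (continuousOn_driftIntegral hγ.le hh))).congr hQJ
  obtain ⟨B, hB⟩ := exists_integral_le_sub_mul_of_eventually_le
    ((continuousOn_drift_integrand hγ.le hh).mono (Ici_subset_Ioi.2 one_pos)) zero_le_one
    ((tendsto_drift_integrand_atBot hγ hh1).eventually_le_atBot (-1))
  obtain ⟨K, hK⟩ := exists_abs_driftIntegral_le hγ.le hderiv hcont h0
  exact ⟨integrableOn_Ioi_one_exp_neg_of_eq_log_sub (by positivity) hQJ hQc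
      fun x hx => by simpa [driftIntegral] using hB x hx,
    integrableOn_Ioo_mul_exp_neg_half_of_eq_log_sub (by positivity) hQJ hQc hK⟩

/-- Let `γ > 0` and let `h` be `C¹` on `[0,∞)` with `h(0) = 0`,
`h(x)/√x → −∞` and `x h'(x)/h(x)² → 0` as `x → ∞`. For the drift
`q(x) = 1/(2x) − (2/(γx)) h(γx²/4)` and `Q(x) = 2∫₁ˣ q`, one has
`∫₁^∞ e^{−Q(x)} dx < ∞` and `∫₀¹ x e^{−Q(x)/2} dx < ∞`, i.e. hypothesis (H4) holds. -/
theorem H4_for_generalized_Feller_drift (γ : ℝ) (hγ : 0 < γ) (h h' : ℝ → ℝ)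
    (hderiv : ∀ x ∈ Set.Ici (0:ℝ), HasDerivWithinAt h (h' x) (Set.Ici 0) x)
    (hcont : ContinuousOn h' (Set.Ici 0))
    (h0 : h 0 = 0)
    (hh1 : Tendsto (fun x => h x / Real.sqrt x) atTop atBot)
    (hh2 : Tendsto (fun x => x * h' x / (h x) ^ 2) atTop (𝓝 0))
    (q Q : ℝ → ℝ)
    (hq : ∀ x ∈ Set.Ioi (0:ℝ), q x = 1 / (2 * x) - (2 / (γ * x)) * h (γ * x ^ 2 / 4))
    (hQ : ∀ x ∈ Set.Ioi (0:ℝ), Q x = 2 * ∫ u in (1:ℝ)..x, q u) :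
    MeasureTheory.IntegrableOn (fun x => Real.exp (-(Q x))) (Set.Ioi 1) ∧
    MeasureTheory.IntegrableOn (fun x => x * Real.exp (-(Q x) / 2)) (Set.Ioo 0 1) :=
  H4_for_generalized_Feller_drift_general γ hγ h h' hderiv hcont h0 hh1 q Q hq hQ
end

section
/- Let γ > 0 and let h : [0,∞) → ℝ be C¹ with h(0) = 0, lim_{x→∞} h(x)/√x = +∞ and lim_{x→∞} x·h'(x)/h(x)² = 0. Let J(x) := ∫₀ˣ 2h(z)/(γz) dz and u(x) := ∫ₓ^∞ e^{−J(z)} dz. Then h(y) + γ·y·u'(y)/u(y) is asymptotically equivalent to −h(y) as y → ∞; equivalently, lim_{y→∞} (γ·y·u'(y)/u(y)) / h(y) = −2. -/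
/-!
Write `φ(z) = γ z / (2 h(z))`, so that `J' = 1/φ`. Then `F = φ e^{-J}` satisfies
`F' = (φ' - 1) e^{-J}`, and `φ' = (γ/2)(1/h - z h'/h²) → 0`. Since `h → ∞`, eventually
`J'(z) ≥ 2/z`, so `e^{-J(z)} = O(z⁻²)`: thus `e^{-J}` is integrable at infinity and `F → 0`.
Integrating `F'` over `(y, ∞)` gives `u(y) ~ F(y)`, and as `u' = -e^{-J}`,
`γ y u'(y) / (u(y) h(y)) = -2 F(y) / u(y) → -2`.
-/

open Filter Set Topology MeasureTheory Asymptotics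

theorem isEquivalent_integral_Ioi_of_deriv_isEquivalent {F g : ℝ → ℝ} {a : ℝ}
    (hF : ∀ x > a, DifferentiableAt ℝ F x) (hF0 : Tendsto F atTop (𝓝 0))
    (hg : IntegrableOn g (Ioi a)) (hg0 : ∀ x > a, 0 ≤ g x)
    (hderiv : deriv F ~[atTop] fun x => -g x) :
    F ~[atTop] fun y => ∫ z in Ioi y, g z := by
  refine isLittleO_iff.2 fun c hc => ?_
  obtain ⟨A, hA⟩ := eventually_atTop.1 (hderiv.isLittleO.def hc)
  filter_upwards [eventually_gt_atTop a, eventually_ge_atTop A] with y hya hyA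
  have hgy : IntegrableOn g (Ioi y) := hg.mono_set (Ioi_subset_Ioi hya.le)
  have hclose : ∀ x ∈ Ioi y, ‖deriv F x + g x‖ ≤ c * g x := fun x hx => by
    simpa [abs_of_nonneg (hg0 x (hya.trans hx))] using hA x (hyA.trans hx.le)
  have hFint : IntegrableOn (deriv F) (Ioi y) := by
    refine Integrable.mono' (hgy.const_mul (1 + c)) (measurable_deriv F).aestronglyMeasurable
      ((ae_restrict_iff' measurableSet_Ioi).2 (ae_of_all _ fun x hx => ?_))
    calc ‖deriv F x‖ ≤ ‖deriv F x + g x‖ + ‖g x‖ := norm_le_add_norm_add _ _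
      _ ≤ c * g x + g x := by
          rw [Real.norm_of_nonneg (hg0 x (hya.trans hx))]; grw [hclose x hx]
      _ = (1 + c) * g x := by ring
  have hFTC : ∫ x in Ioi y, deriv F x = 0 - F y :=
    integral_Ioi_of_hasDerivAt_of_tendsto (hF y hya).continuousAt.continuousWithinAt
      (fun x hx => (hF x (hya.trans hx)).hasDerivAt) hFint hF0
  have hU0 : 0 ≤ ∫ z in Ioi y, g z :=
    setIntegral_nonneg measurableSet_Ioi fun x hx => hg0 x (hya.trans hx)
  calc ‖F y - ∫ z in Ioi y, g z‖ = ‖∫ x in Ioi y, (deriv F x + g x)‖ := by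
        rw [integral_add hFint hgy, hFTC, ← norm_neg]; ring_nf
    _ ≤ ∫ x in Ioi y, c * g x :=
        norm_integral_le_of_norm_le (hgy.const_mul c)
          ((ae_restrict_iff' measurableSet_Ioi).2 (ae_of_all _ hclose))
    _ = c * ‖∫ z in Ioi y, g z‖ := by
        rw [integral_const_mul, Real.norm_of_nonneg hU0]

theorem intervalIntegrable_div_self_of_hasDerivWithinAt {h : ℝ → ℝ} {d x : ℝ} (hx : 0 ≤ x)
    (hc : ContinuousOn h (Icc 0 x)) (hd : HasDerivWithinAt h d (Ici 0) 0) (h0 : h 0 = 0) :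
    IntervalIntegrable (fun z => h z / z) volume 0 x := by
  classical
  -- `h z / z` extends continuously to `[0, x]` by the value `d` at `0`
  set k := Function.update (fun z => h z / z) 0 d
  have hk : ContinuousOn k (Icc 0 x) := by
    intro z hz
    rcases hz.1.eq_or_lt with rfl | hz0
    · refine continuousWithinAt_update_same.2 ?_
      have := hasDerivWithinAt_iff_tendsto_slope.1 (hd.mono (Icc_subset_Ici_self : Icc 0 x ⊆ _))
      simpa only [slope_fun_def_field, h0, sub_zero] using this
    · exact (continuousWithinAt_update_of_ne hz0.ne').2
        ((hc z hz).div continuousWithinAt_id hz0.ne')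
  rw [intervalIntegrable_iff_integrableOn_Ioc_of_le hx]
  exact ((hk.integrableOn_Icc).mono_set Ioc_subset_Icc_self).congr_fun
    (fun z hz => Function.update_of_ne hz.1.ne' _ _) measurableSet_Ioc

theorem hasDerivAt_integral_Ioi {g : ℝ → ℝ} {a y : ℝ} (hg : IntegrableOn g (Ioi a)) (hy : a < y)
    (hc : ContinuousAt g y) : HasDerivAt (fun x => ∫ z in Ioi x, g z) (-g y) y := by
  have hsplit : (fun x => (∫ z in Ioi a, g z) - ∫ z in a..x, g z) =ᶠ[𝓝 y]
      fun x => ∫ z in Ioi x, g z := by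
    filter_upwards [eventually_gt_nhds hy] with x hx
    rw [← intervalIntegral.integral_Ioi_sub_Ioi hg hx.le, sub_sub_cancel]
  have hI : HasDerivAt (fun x => ∫ z in a..x, g z) (g y) y :=
    intervalIntegral.integral_hasDerivAt_right
      ((intervalIntegrable_iff_integrableOn_Ioc_of_le hy.le).2 (hg.mono_set Ioc_subset_Ioi_self))
      ⟨Ioi a, Ioi_mem_nhds hy, hg.aestronglyMeasurable⟩ hc
  simpa using (hI.const_sub _).congr_of_eventuallyEq hsplit.symm

section DecayOfExpNeg

variable {J J' : ℝ → ℝ} {a k : ℝ}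

theorem exp_neg_le_mul_rpow_neg_of_div_le_deriv (ha : 0 < a)
    (hJ : ∀ x ≥ a, HasDerivAt J (J' x) x) (hk : ∀ x ≥ a, k / x ≤ J' x) {x : ℝ} (hx : a ≤ x) :
    Real.exp (-J x) ≤ Real.exp (-J a) * a ^ k * x ^ (-k) := by
  have hq : MonotoneOn (fun x => J x - k * Real.log x) (Ici a) := by
    have hd : ∀ x ∈ Ici a, HasDerivAt (fun x => J x - k * Real.log x) (J' x - k * x⁻¹) x :=
      fun x hx => (hJ x hx).sub ((Real.hasDerivAt_log (ha.trans_le hx).ne').const_mul k)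
    refine monotoneOn_of_deriv_nonneg (convex_Ici a)
      (fun x hx => (hd x hx).continuousAt.continuousWithinAt)
      (fun x hx => (hd x (interior_subset hx)).differentiableAt.differentiableWithinAt)
      fun x hx => ?_
    rw [(hd x (interior_subset hx)).deriv, sub_nonneg, ← div_eq_mul_inv]
    exact hk x (interior_subset hx)
  have := hq self_mem_Ici hx hx
  rw [Real.rpow_def_of_pos ha, Real.rpow_def_of_pos (ha.trans_le hx), ← Real.exp_add,
    ← Real.exp_add]
  exact Real.exp_le_exp.2 (by linarith)

theorem integrableOn_Ioi_exp_neg_of_div_le_deriv (ha : 0 < a)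
    (hJ : ∀ x ≥ a, HasDerivAt J (J' x) x) (hk : ∀ x ≥ a, k / x ≤ J' x) (hk1 : 1 < k) :
    IntegrableOn (fun x => Real.exp (-J x)) (Ioi a) := by
  refine Integrable.mono'
    ((integrableOn_Ioi_rpow_of_lt (neg_lt_neg hk1) ha).const_mul (Real.exp (-J a) * a ^ k))
    (ContinuousOn.aestronglyMeasurable (fun x hx => ?_) measurableSet_Ioi)
    ((ae_restrict_iff' measurableSet_Ioi).2 (ae_of_all _ fun x hx => ?_))
  · exact (hJ x (le_of_lt hx)).continuousAt.neg.rexp.continuousWithinAt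
  · rw [Real.norm_of_nonneg (Real.exp_pos _).le]
    exact exp_neg_le_mul_rpow_neg_of_div_le_deriv ha hJ hk hx.le

theorem tendsto_mul_exp_neg_of_div_le_deriv (ha : 0 < a) (hJ : ∀ x ≥ a, HasDerivAt J (J' x) x)
    (hk : ∀ x ≥ a, k / x ≤ J' x) (hk1 : 1 < k) :
    Tendsto (fun x => x * Real.exp (-J x)) atTop (𝓝 0) := by
  have hlim : Tendsto (fun x : ℝ => Real.exp (-J a) * a ^ k * x ^ (-(k - 1))) atTop (𝓝 0) := by
    simpa using (tendsto_rpow_neg_atTop (sub_pos.2 hk1)).const_mul (Real.exp (-J a) * a ^ k)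
  refine squeeze_zero' ?_ ?_ hlim
  · filter_upwards [eventually_ge_atTop a] with x hx
    exact mul_nonneg (ha.trans_le hx).le (Real.exp_pos _).le
  · filter_upwards [eventually_ge_atTop a] with x hx
    have hx0 : 0 < x := ha.trans_le hx
    calc x * Real.exp (-J x) ≤ x * (Real.exp (-J a) * a ^ k * x ^ (-k)) :=
          mul_le_mul_of_nonneg_left (exp_neg_le_mul_rpow_neg_of_div_le_deriv ha hJ hk hx) hx0.le
      _ = Real.exp (-J a) * a ^ k * x ^ (-(k - 1)) := by
          rw [neg_sub, sub_eq_add_neg, Real.rpow_add hx0, Real.rpow_one]; ring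

end DecayOfExpNeg

theorem isEquivalent_integral_Ioi_exp_neg {J φ φ' : ℝ → ℝ} {a : ℝ}
    (hJ : ∀ x > a, HasDerivAt J (φ x)⁻¹ x) (hφ : ∀ x > a, HasDerivAt φ (φ' x) x)
    (hφ0 : ∀ x > a, φ x ≠ 0) (hφ' : Tendsto φ' atTop (𝓝 0))
    (hint : IntegrableOn (fun x => Real.exp (-J x)) (Ioi a))
    (hlim : Tendsto (fun x => φ x * Real.exp (-J x)) atTop (𝓝 0)) :
    (fun x => φ x * Real.exp (-J x)) ~[atTop] fun y => ∫ z in Ioi y, Real.exp (-J z) := by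
  have hF : ∀ x > a, HasDerivAt (fun x => φ x * Real.exp (-J x))
      ((φ' x - 1) * Real.exp (-J x)) x := fun x hx => by
    refine ((hφ x hx).mul (hJ x hx).neg.exp).congr_deriv ?_
    simp only [Pi.neg_apply]
    field_simp [hφ0 x hx]
    ring
  refine isEquivalent_integral_Ioi_of_deriv_isEquivalent (fun x hx => (hF x hx).differentiableAt)
    hlim hint (fun x _ => (Real.exp_pos _).le) ?_
  have hφ'1 : (fun x => φ' x - 1) ~[atTop] fun _ => (-1 : ℝ) :=
    (isEquivalent_const_iff_tendsto (by norm_num)).2 (by simpa using hφ'.sub_const 1)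
  refine ((hφ'1.mul (IsEquivalent.refl (u := fun x => Real.exp (-J x)))).congr_left ?_).congr_right
    ?_
  · filter_upwards [eventually_gt_atTop a] with x hx
    exact (hF x hx).deriv.symm
  · exact Eventually.of_forall fun x => by simp

theorem tendsto_mul_deriv_integral_Ioi_exp_neg_div {J φ φ' : ℝ → ℝ} {a k : ℝ} (ha : 0 < a)
    (hk1 : 1 < k) (hJ : ∀ x ≥ a, HasDerivAt J (φ x)⁻¹ x) (hφ : ∀ x ≥ a, HasDerivAt φ (φ' x) x)
    (hφ0 : ∀ x ≥ a, 0 < φ x) (hk : ∀ x ≥ a, k / x ≤ (φ x)⁻¹) (hφ' : Tendsto φ' atTop (𝓝 0)) :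
    Tendsto (fun y => φ y * deriv (fun y => ∫ z in Ioi y, Real.exp (-J z)) y /
      ∫ z in Ioi y, Real.exp (-J z)) atTop (𝓝 (-1)) := by
  have hint := integrableOn_Ioi_exp_neg_of_div_le_deriv ha hJ hk hk1
  have hlim : Tendsto (fun x => φ x * Real.exp (-J x)) atTop (𝓝 0) := by
    have hxk : ∀ x ≥ a, φ x ≤ x / k := fun x hx => by
      simpa using (le_inv_comm₀ (div_pos (by linarith) (ha.trans_le hx)) (hφ0 x hx)).1 (hk x hx)
    refine squeeze_zero' ?_ ?_ (by simpa using
      (tendsto_mul_exp_neg_of_div_le_deriv ha hJ hk hk1).const_mul k⁻¹)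
    · filter_upwards [eventually_ge_atTop a] with x hx
      exact mul_nonneg (hφ0 x hx).le (Real.exp_pos _).le
    · filter_upwards [eventually_ge_atTop a] with x hx
      calc φ x * Real.exp (-J x) ≤ x / k * Real.exp (-J x) :=
            mul_le_mul_of_nonneg_right (hxk x hx) (Real.exp_pos _).le
        _ = k⁻¹ * (x * Real.exp (-J x)) := by ring
  have hequiv := isEquivalent_integral_Ioi_exp_neg (fun x hx => hJ x hx.le)
    (fun x hx => hφ x hx.le) (fun x hx => (hφ0 x hx.le).ne') hφ' hint hlim
  have hpos := hequiv.symm.eventually_pos <| by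
    filter_upwards [eventually_ge_atTop a] with x hx
    exact mul_pos (hφ0 x hx) (Real.exp_pos _)
  have hratio := (isEquivalent_iff_tendsto_one (hpos.mono fun _ hy => hy.ne')).1 hequiv
  refine hratio.neg.congr' ?_
  filter_upwards [eventually_gt_atTop a] with y hy
  rw [(hasDerivAt_integral_Ioi hint hy (hJ y hy.le).continuousAt.neg.rexp).deriv]
  simp only [Pi.div_apply]
  ring

section ConditionedDrift

variable {γ : ℝ} {h h' : ℝ → ℝ} {x : ℝ}

theorem hasDerivAt_integral_two_mul_div_mul (hγ : γ ≠ 0)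
    (hderiv : ∀ x ∈ Ici (0:ℝ), HasDerivWithinAt h (h' x) (Ici 0) x) (h0 : h 0 = 0)
    (hx : 0 < x) :
    HasDerivAt (fun x => ∫ z in (0:ℝ)..x, 2 * h z / (γ * z)) (2 * h x / (γ * x)) x := by
  have hc : ContinuousOn h (Ici 0) := fun z hz => (hderiv z hz).continuousWithinAt
  have hcont : ∀ z > 0, ContinuousAt (fun z => 2 * h z / (γ * z)) z := fun z hz =>
    (continuousAt_const.mul ((hderiv z hz.le).hasDerivAt (Ici_mem_nhds hz)).continuousAt).div
      (continuousAt_const.mul continuousAt_id) (mul_ne_zero hγ hz.ne')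
  have hint : IntervalIntegrable (fun z => 2 * h z / (γ * z)) volume 0 x := by
    simpa only [mul_div_mul_comm] using (intervalIntegrable_div_self_of_hasDerivWithinAt hx.le
      (hc.mono Icc_subset_Ici_self) (hderiv 0 self_mem_Ici) h0).const_mul (2 / γ)
  exact intervalIntegral.integral_hasDerivAt_right hint
    (ContinuousOn.stronglyMeasurableAtFilter isOpen_Ioi
      (fun z hz => (hcont z hz).continuousWithinAt) x hx) (hcont x hx)

theorem hasDerivAt_mul_div_two_mul (hh : HasDerivAt h (h' x) x) (hhx : h x ≠ 0) :
    HasDerivAt (fun z => γ * z / (2 * h z)) (γ / 2 * ((h x)⁻¹ - x * h' x / h x ^ 2)) x := by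
  refine (((hasDerivAt_id x).const_mul γ).div (hh.const_mul 2)
    (mul_ne_zero two_ne_zero hhx)).congr_deriv ?_
  simp only [id]
  field_simp

theorem tendsto_deriv_mul_div_two_mul (hh : Tendsto h atTop atTop)
    (hh2 : Tendsto (fun x => x * h' x / (h x) ^ 2) atTop (𝓝 0)) :
    Tendsto (fun x => γ / 2 * ((h x)⁻¹ - x * h' x / h x ^ 2)) atTop (𝓝 0) := by
  simpa using ((tendsto_inv_atTop_zero.comp hh).sub hh2).const_mul (γ / 2)

theorem two_div_le_inv_mul_div_two_mul (hγ : 0 < γ) (hx : 0 < x) (hγh : γ ≤ h x) :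
    2 / x ≤ (γ * x / (2 * h x))⁻¹ := by
  rw [inv_div, ← mul_div_mul_left 2 x hγ.ne']
  exact div_le_div_of_nonneg_right (by linarith) (mul_pos hγ hx).le

end ConditionedDrift

theorem conditioned_drift_asymptotics_general (γ : ℝ) (hγ : 0 < γ) (h h' : ℝ → ℝ)
    (hderiv : ∀ x ∈ Set.Ici (0:ℝ), HasDerivWithinAt h (h' x) (Set.Ici 0) x)
    (h0 : h 0 = 0)
    (hh1 : Tendsto (fun x => h x / Real.sqrt x) atTop atTop)
    (hh2 : Tendsto (fun x => x * h' x / (h x) ^ 2) atTop (𝓝 0))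
    (J u : ℝ → ℝ)
    (hJ : ∀ x, J x = ∫ z in (0:ℝ)..x, 2 * h z / (γ * z))
    (hu : ∀ x, u x = ∫ z in Set.Ioi x, Real.exp (-(J z))) :
    Tendsto (fun y => (γ * y * deriv u y / u y) / h y) atTop (𝓝 (-2)) := by
  obtain rfl : J = _ := funext hJ
  obtain rfl : u = _ := funext hu
  have hh : Tendsto h atTop atTop :=
    (hh1.atTop_mul_atTop₀ Real.tendsto_sqrt_atTop).congr' <| by
      filter_upwards [eventually_gt_atTop 0] with x hx
      exact div_mul_cancel₀ _ (Real.sqrt_pos.2 hx).ne'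
  obtain ⟨a, ha⟩ := eventually_atTop.1 ((eventually_gt_atTop 0).and (hh.eventually_ge_atTop γ))
  have hhpos : ∀ x ≥ a, 0 < h x := fun x hx => hγ.trans_le (ha x hx).2
  have hlog := tendsto_mul_deriv_integral_Ioi_exp_neg_div (φ := fun z => γ * z / (2 * h z))
    (ha a le_rfl).1 one_lt_two
    (fun x hx => by simpa only [inv_div] using
      hasDerivAt_integral_two_mul_div_mul hγ.ne' hderiv h0 (ha x hx).1)
    (fun x hx => hasDerivAt_mul_div_two_mul
      ((hderiv x (ha x hx).1.le).hasDerivAt (Ici_mem_nhds (ha x hx).1)) (hhpos x hx).ne')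
    (fun x hx => div_pos (mul_pos hγ (ha x hx).1) (mul_pos two_pos (hhpos x hx)))
    (fun x hx => two_div_le_inv_mul_div_two_mul hγ (ha x hx).1 (ha x hx).2)
    (tendsto_deriv_mul_div_two_mul hh hh2)
  rw [show (-2 : ℝ) = 2 * -1 by norm_num]
  refine (hlog.const_mul 2).congr' ?_
  filter_upwards [eventually_ge_atTop a] with y hy
  field_simp [(hhpos y hy).ne']

/-- Let `γ > 0` and let `h : [0,∞) → ℝ` be `C¹` with `h(0) = 0`,
`h(x)/√x → +∞` and `x h'(x)/h(x)² → 0` as `x → ∞`. With `J(x) = ∫₀ˣ 2h(z)/(γz) dz` and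
`u(x) = ∫ₓ^∞ e^{−J(z)} dz`, the drift of the conditioned process satisfies
`h(y) + γ y u'(y)/u(y) ∼ −h(y)` as `y → ∞`; equivalently,
`(γ y u'(y)/u(y)) / h(y) → −2`. -/
theorem conditioned_drift_asymptotics (γ : ℝ) (hγ : 0 < γ) (h h' : ℝ → ℝ)
    (hderiv : ∀ x ∈ Set.Ici (0:ℝ), HasDerivWithinAt h (h' x) (Set.Ici 0) x)
    (hcont : ContinuousOn h' (Set.Ici 0))
    (h0 : h 0 = 0)
    (hh1 : Tendsto (fun x => h x / Real.sqrt x) atTop atTop)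
    (hh2 : Tendsto (fun x => x * h' x / (h x) ^ 2) atTop (𝓝 0))
    (J u : ℝ → ℝ)
    (hJ : ∀ x, J x = ∫ z in (0:ℝ)..x, 2 * h z / (γ * z))
    (hu : ∀ x, u x = ∫ z in Set.Ioi x, Real.exp (-(J z))) :
    Tendsto (fun y => (γ * y * deriv u y / u y) / h y) atTop (𝓝 (-2)) :=
  conditioned_drift_asymptotics_general γ hγ h h' hderiv h0 hh1 hh2 J u hJ hu
end
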